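/- arXiv:math/0503123 — 2 statements merged into one kernel-verified Lean document; each statement's English description precedes it below -/
import Mathlib

section
/- Let μ_R be a Borel probability measure supported in the closed ball B_R ⊂ ℝ^d, let X¹, …, X^N be independent random variables with law μ_R, and let μ̂_R^N = (1/N) Σ_{i=1}^N δ_{X^i} be the empirical measure. Then for every subset B of P(B_R) that is convex and compact for the weak topology, ℙ[ μ̂_R^N ∈ B ] ≤ exp( −N · inf_{ν ∈ B} H(ν | μ_R) ). -/
open MeasureTheory ProbabilityTheory Metric Set
open scoped ENNReal NNReal Classical

noncomputable section

abbrev Rd (d : ℕ) := EuclideanSpace ℝ (Fin d)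

/-- Wasserstein distance of order `p` between two measures. -/
def Wp {E : Type*} [MeasurableSpace E] [PseudoMetricSpace E] (p : ℝ) (μ ν : Measure E) : ℝ :=
  sInf { c : ℝ | ∃ π : Measure (E × E), IsProbabilityMeasure π ∧
    π.map Prod.fst = μ ∧ π.map Prod.snd = ν ∧
    c = (∫ z, dist z.1 z.2 ^ p ∂π) ^ (1 / p) }

/-- Relative entropy `H(ν|μ)`. -/
def relEnt {E : Type*} [MeasurableSpace E] (ν μ : Measure E) : ℝ≥0∞ :=
  if ν ≪ μ ∧ Integrable (fun x => ((ν.rnDeriv μ x).toReal) * Real.log ((ν.rnDeriv μ x).toReal)) μ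
  then ENNReal.ofReal (∫ x, ((ν.rnDeriv μ x).toReal) * Real.log ((ν.rnDeriv μ x).toReal) ∂μ)
  else ⊤

/-- The transportation inequality `T_p(λ)`. -/
def SatisfiesTp {E : Type*} [MeasurableSpace E] [PseudoMetricSpace E]
    (p lam : ℝ) (μ : Measure E) : Prop :=
  ∀ ν : Measure E, IsProbabilityMeasure ν →
    ENNReal.ofReal (Wp p ν μ) ≤ (ENNReal.ofReal (2 / lam) * relEnt ν μ) ^ (1 / 2 : ℝ)

/-- Empirical measure of `N` samples. -/
def empMeas {Ω E : Type*} [MeasurableSpace E] {N : ℕ} (X : Fin N → Ω → E) (ω : Ω) : Measure E :=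
  (N : ℝ≥0∞)⁻¹ • ∑ i, Measure.dirac (X i ω)


open Filter Topology

-- clamp is 1-Lipschitz onto points of [-M, M]
lemma clamp_sub_le (a b M : ℝ) (hb : |b| ≤ M) : |max (-M) (min a M) - b| ≤ |a - b| := by
  rw [abs_le] at hb
  rcases lt_or_ge a (-M) with h1 | h1
  · rw [min_eq_left (h1.le.trans (by linarith)), max_eq_left (by linarith)]
    rw [abs_of_nonpos (by linarith), abs_of_nonpos (by linarith)]
    linarith
  · rcases le_or_gt a M with h2 | h2
    · rw [min_eq_left h2, max_eq_right h1]
    · rw [min_eq_right h2.le, max_eq_right (by linarith)]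
      rw [abs_of_nonneg (by linarith), abs_of_nonneg (by linarith)]
      linarith

lemma exp_lipschitz (a b M : ℝ) (ha : |a| ≤ M) (hb : |b| ≤ M) :
    |Real.exp a - Real.exp b| ≤ Real.exp M * |a - b| := by
  rw [abs_le] at ha hb
  wlog hab : b ≤ a generalizing a b
  · rw [abs_sub_comm, abs_sub_comm a b]
    exact this b a hb ha (by linarith)
  have h1 : Real.exp b - Real.exp a ≤ 0 := by
    simp only [sub_nonpos, Real.exp_le_exp]; exact hab
  rw [abs_of_nonneg (by linarith [Real.exp_le_exp.2 hab]), abs_of_nonneg (by linarith)]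
  have key : Real.exp a - Real.exp b ≤ Real.exp a * (a - b) := by
    have h2 : 1 - (a - b) ≤ Real.exp (-(a-b)) := by
      have := Real.add_one_le_exp (-(a-b))
      linarith
    have h3 : Real.exp a * (1 - (a - b)) ≤ Real.exp a * Real.exp (-(a-b)) :=
      mul_le_mul_of_nonneg_left h2 (Real.exp_nonneg _)
    rw [← Real.exp_add] at h3
    have : a + -(a - b) = b := by ring
    rw [this] at h3
    nlinarith [Real.exp_pos a]
  have h4 : Real.exp a * (a - b) ≤ Real.exp M * (a - b) :=
    mul_le_mul_of_nonneg_right (Real.exp_le_exp.2 ha.2) (by linarith)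
  linarith

lemma log_one_add_le (t : ℝ) (ht : 0 ≤ t) : Real.log (1 + t) ≤ t := by
  have := Real.log_le_sub_one_of_pos (show (0:ℝ) < 1 + t by linarith)
  linarith


lemma abs_clamp_le (a c : ℝ) (hc : 0 ≤ c) : |max (-c) (min a c)| ≤ |a| := by
  rcases le_total a 0 with ha | ha
  · rw [min_eq_left (ha.trans hc)]
    have h1 : max (-c) a ≤ 0 := max_le (by linarith) ha
    rw [abs_of_nonpos h1, abs_of_nonpos ha]
    simp only [neg_le_neg_iff]
    exact le_max_right _ _
  · have h0 : (0:ℝ) ≤ min a c := le_min ha hc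
    rw [max_eq_right (by linarith), abs_of_nonneg h0, abs_of_nonneg ha]
    exact min_le_left _ _

lemma abs_clamp_le_c (a c : ℝ) (hc : 0 ≤ c) : |max (-c) (min a c)| ≤ c := by
  rw [abs_le]
  constructor
  · exact le_max_left _ _
  · exact max_le (by linarith) (min_le_right _ _)

lemma sub_one_le_mul_log (y : ℝ) (hy : 0 ≤ y) : y - 1 ≤ y * Real.log y := by
  rcases eq_or_lt_of_le hy with h | h
  · simp [← h]
  · have h1 : Real.log y⁻¹ ≤ y⁻¹ - 1 := Real.log_le_sub_one_of_pos (by positivity)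
    rw [Real.log_inv] at h1
    have h2 : 1 - y⁻¹ ≤ Real.log y := by linarith
    have h3 : y * (1 - y⁻¹) ≤ y * Real.log y := mul_le_mul_of_nonneg_left h2 hy
    have h4 : y * (1 - y⁻¹) = y - 1 := by field_simp
    linarith

lemma dual_witness_measurable {d : ℕ} (μ q : Measure (Rd d))
    [IsProbabilityMeasure μ] [IsProbabilityMeasure q] {r ε : ℝ} (hε : 0 < ε)
    (h : ENNReal.ofReal r ≤ relEnt q μ) :
    ∃ (M : ℝ) (f : Rd d → ℝ), 0 ≤ M ∧ Measurable f ∧ (∀ x, |f x| ≤ M) ∧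
      (∫ x, Real.exp (f x) ∂μ) ≤ 1 ∧ r - ε < ∫ x, f x ∂q := by
  rcases lt_or_ge (r - ε) 0 with h0 | hre
  · refine ⟨0, fun _ => 0, le_refl _, measurable_const, by simp, by simp, by simpa using h0⟩
  have hrpos : 0 < r := lt_of_lt_of_le hε (by linarith)
  by_cases hac : q ≪ μ
  swap
  · -- singular part exists
    rw [Measure.AbsolutelyContinuous] at hac
    push_neg at hac
    obtain ⟨s, hs1, hs2⟩ := hac
    obtain ⟨t, hst, htm, htμ⟩ := exists_measurable_superset_of_null hs1
    have hqt : 0 < q t := lt_of_lt_of_le (pos_iff_ne_zero.2 hs2) (measure_mono hst)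
    have hqtR : 0 < (q t).toReal := ENNReal.toReal_pos hqt.ne' (measure_ne_top _ _)
    set c : ℝ := (r + 1) / (q t).toReal with hc
    have hcpos : 0 < c := by positivity
    refine ⟨c, t.indicator (fun _ => c), hcpos.le, measurable_const.indicator htm, ?_, ?_, ?_⟩
    · intro x
      by_cases hx : x ∈ t <;> simp [indicator_apply, hx, abs_of_nonneg, hcpos.le]
    · have hae : t.indicator (fun _ => c) =ᵐ[μ] (fun _ => (0:ℝ)) := by
        have : ∀ᵐ x ∂μ, x ∉ t := by
          rw [← compl_mem_ae_iff] at htμ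
          exact htμ
        filter_upwards [this] with x hx
        simp [indicator_apply, hx]
      have : (fun x => Real.exp (t.indicator (fun _ => c) x)) =ᵐ[μ] (fun _ => (1:ℝ)) := by
        filter_upwards [hae] with x hx
        simp [hx]
      rw [integral_congr_ae this]
      simp
    · rw [integral_indicator_const _ htm]
      have : (q t).toReal • c = r + 1 := by
        rw [smul_eq_mul, hc, mul_div_cancel₀ _ hqtR.ne']
      rw [measureReal_def, this]; linarith
  -- absolutely continuous case
  set G : Rd d → ℝ := fun x => (q.rnDeriv μ x).toReal with hG
  have hGmeas : Measurable G := (Measure.measurable_rnDeriv q μ).ennreal_toReal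
  have hGnn : ∀ x, 0 ≤ G x := fun x => ENNReal.toReal_nonneg
  have hGint : Integrable G μ := Measure.integrable_toReal_rnDeriv
  have hGone : ∫ x, G x ∂μ = 1 := by
    rw [Measure.integral_toReal_rnDeriv hac]; simp
  -- truncated log-density
  set fn : ℕ → Rd d → ℝ := fun n x =>
    if 0 < G x then max (-(n:ℝ)) (min (Real.log (G x)) (n:ℝ)) else -(n:ℝ) with hfn
  have hfnmeas : ∀ n, Measurable (fn n) := by
    intro n
    exact Measurable.ite (measurableSet_lt measurable_const hGmeas)
      (measurable_const.max ((Real.measurable_log.comp hGmeas).min measurable_const))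
      measurable_const
  have hfnabs : ∀ n x, |fn n x| ≤ (n:ℝ) := by
    intro n x
    by_cases hx : 0 < G x
    · simp only [hfn, if_pos hx]
      exact abs_clamp_le_c _ _ (Nat.cast_nonneg n)
    · simp [hfn, if_neg hx, abs_of_nonpos, Nat.cast_nonneg n]
  have hfnint : ∀ n, Integrable (fn n) q := by
    intro n
    refine (integrable_const ((n:ℝ))).mono' (hfnmeas n).aestronglyMeasurable ?_
    filter_upwards with x using (by simpa using hfnabs n x)
  have hexpfn : ∀ n x, Real.exp (fn n x) ≤ G x + Real.exp (-(n:ℝ)) := by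
    intro n x
    by_cases hx : 0 < G x
    · simp only [hfn, if_pos hx]
      rw [Real.exp_strictMono.monotone.map_max]
      apply max_le
      · exact le_add_of_nonneg_left (hGnn x)
      · have : Real.exp (min (Real.log (G x)) (n:ℝ)) ≤ G x := by
          rw [← Real.exp_log hx]
          exact Real.exp_le_exp.2 (by rw [Real.exp_log hx]; exact min_le_left _ _)
        exact this.trans (le_add_of_nonneg_right (Real.exp_nonneg _))
    · simp only [hfn, if_neg hx]
      exact le_add_of_nonneg_left (hGnn x)
  have hexpint : ∀ n, Integrable (fun x => Real.exp (fn n x)) μ := by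
    intro n
    refine (integrable_const (Real.exp (n:ℝ))).mono'
      ((hfnmeas n).exp).aestronglyMeasurable ?_
    filter_upwards with x
    rw [Real.norm_eq_abs, abs_of_pos (Real.exp_pos _)]
    exact Real.exp_le_exp.2 ((le_abs_self _).trans (hfnabs n x))
  have hexpbound : ∀ n, (∫ x, Real.exp (fn n x) ∂μ) ≤ 1 + Real.exp (-(n:ℝ)) := by
    intro n
    calc (∫ x, Real.exp (fn n x) ∂μ) ≤ ∫ x, (G x + Real.exp (-(n:ℝ))) ∂μ :=
      integral_mono (hexpint n) (hGint.add (integrable_const _)) (hexpfn n)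
    _ = 1 + Real.exp (-(n:ℝ)) := by
        rw [integral_add hGint (integrable_const _), hGone, integral_const]
        simp
  -- transfer formula
  have htrans : ∀ n, ∫ x, fn n x ∂q = ∫ x, G x * fn n x ∂μ := by
    intro n
    set g' : Rd d → ℝ≥0 := fun x => (q.rnDeriv μ x).toNNReal with hg'
    have hg'meas : Measurable g' := (Measure.measurable_rnDeriv q μ).ennreal_toNNReal
    have hae : q.rnDeriv μ =ᵐ[μ] fun x => ((g' x : ℝ≥0) : ℝ≥0∞) := by
      filter_upwards [Measure.rnDeriv_lt_top q μ] with x hx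
      exact (ENNReal.coe_toNNReal hx.ne).symm
    have hqd : q = μ.withDensity (fun x => ((g' x : ℝ≥0) : ℝ≥0∞)) := by
      conv_lhs => rw [← (haveI : q.HaveLebesgueDecomposition μ :=
        Measure.haveLebesgueDecomposition_of_finiteMeasure; Measure.withDensity_rnDeriv_eq q μ hac)]
      exact withDensity_congr_ae hae
    rw [hqd, integral_withDensity_eq_integral_smul hg'meas]
    congr 1
  -- the main estimate: eventually the truncated entropy exceeds r - ε/2
  have hfinal : ∀ᶠ n in atTop, r - ε/2 < ∫ x, G x * fn n x ∂μ := by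
    by_cases hInt : Integrable (fun x => G x * Real.log (G x)) μ
    · -- finite entropy case
      have hIr : r ≤ ∫ x, G x * Real.log (G x) ∂μ := by
        rw [relEnt, if_pos ⟨hac, hInt⟩] at h
        rcases (ENNReal.ofReal_le_ofReal_iff').1 h with h' | h'
        · exact h'
        · linarith
      have hFmeas : ∀ n : ℕ, AEStronglyMeasurable (fun x => G x * fn n x) μ :=
        fun n => (hGmeas.mul (hfnmeas n)).aestronglyMeasurable
      have hbound : ∀ n : ℕ, ∀ᵐ x ∂μ, ‖G x * fn n x‖ ≤ |G x * Real.log (G x)| := by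
        intro n
        filter_upwards with x
        by_cases hx : 0 < G x
        · rw [Real.norm_eq_abs, abs_mul, abs_mul]
          apply mul_le_mul_of_nonneg_left _ (abs_nonneg _)
          simp only [hfn, if_pos hx]
          exact abs_clamp_le _ _ (Nat.cast_nonneg n)
        · have hG0 : G x = 0 := le_antisymm (not_lt.1 hx) (hGnn x)
          simp [hG0]
      have hlim : ∀ᵐ x ∂μ, Tendsto (fun n : ℕ => G x * fn n x) atTop
          (𝓝 (G x * Real.log (G x))) := by
        filter_upwards with x
        by_cases hx : 0 < G x
        · apply Tendsto.congr' _ tendsto_const_nhds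
          filter_upwards [eventually_ge_atTop ⌈|Real.log (G x)|⌉₊] with n hn
          have hn' : |Real.log (G x)| ≤ (n:ℝ) :=
            (Nat.le_ceil _).trans (Nat.cast_le.2 hn)
          have h1 : Real.log (G x) ≤ (n:ℝ) := (le_abs_self _).trans hn'
          have h2 : -(n:ℝ) ≤ Real.log (G x) := by
            have := (neg_abs_le (Real.log (G x)))
            linarith
          simp only [hfn, if_pos hx]
          rw [min_eq_left h1, max_eq_right h2]
        · have hG0 : G x = 0 := le_antisymm (not_lt.1 hx) (hGnn x)
          simp [hfn, if_neg hx, hG0]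
      have htend := tendsto_integral_of_dominated_convergence _ hFmeas hInt.abs hbound hlim
      exact htend.eventually (lt_mem_nhds (by linarith))
    · -- infinite entropy case
      -- positive part has infinite integral
      have hkey : ∫⁻ x, ENNReal.ofReal (G x * max (Real.log (G x)) 0) ∂μ = ⊤ := by
        by_contra hfin
        apply hInt
        have hposmeas : Measurable (fun x => G x * max (Real.log (G x)) 0) :=
          hGmeas.mul ((Real.measurable_log.comp hGmeas).max measurable_const)
        have hposnn : ∀ x, 0 ≤ G x * max (Real.log (G x)) 0 :=
          fun x => mul_nonneg (hGnn x) (le_max_right _ _)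
        have hposint : Integrable (fun x => G x * max (Real.log (G x)) 0) μ := by
          refine ⟨hposmeas.aestronglyMeasurable, ?_⟩
          rw [hasFiniteIntegral_iff_ofReal (ae_of_all _ hposnn)]
          exact lt_top_iff_ne_top.2 hfin
        refine ((hposint.add (integrable_const 1)).mono'
          (hGmeas.mul (Real.measurable_log.comp hGmeas)).aestronglyMeasurable ?_)
        filter_upwards with x
        rw [Real.norm_eq_abs]
        have hlb : G x - 1 ≤ G x * Real.log (G x) := sub_one_le_mul_log _ (hGnn x)
        have hub : G x * Real.log (G x) ≤ G x * max (Real.log (G x)) 0 :=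
          mul_le_mul_of_nonneg_left (le_max_left _ _) (hGnn x)
        have hgx := hGnn x
        have hpx : (0:ℝ) ≤ G x * max (Real.log (G x)) 0 := hposnn x
        simp only [Pi.add_apply]
        rw [abs_le]
        constructor <;> linarith
      -- monotone approximations of the positive part
      set An : ℕ → Rd d → ℝ := fun n x => G x * min (max (Real.log (G x)) 0) (n:ℝ) with hAn
      have hAmeas : ∀ n, Measurable (An n) := fun n =>
        hGmeas.mul (((Real.measurable_log.comp hGmeas).max measurable_const).min
          measurable_const)
      have hAnn : ∀ n x, 0 ≤ An n x := fun n x =>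
        mul_nonneg (hGnn x) (le_min (le_max_right _ _) (Nat.cast_nonneg n))
      have hAmono : ∀ x, Monotone (fun n : ℕ => An n x) := by
        intro x n m hnm
        exact mul_le_mul_of_nonneg_left
          (min_le_min (le_refl _) (Nat.cast_le.2 hnm)) (hGnn x)
      have hAle : ∀ n x, An n x ≤ (n:ℝ) * G x := by
        intro n x
        rw [mul_comm]
        exact mul_le_mul_of_nonneg_left (min_le_right _ _) (hGnn x)
      have hAint : ∀ n, Integrable (An n) μ := by
        intro n
        refine (hGint.const_mul (n:ℝ)).mono' (hAmeas n).aestronglyMeasurable ?_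
        filter_upwards with x
        rw [Real.norm_eq_abs, abs_of_nonneg (hAnn n x)]
        exact hAle n x
      set ψ : ℕ → Rd d → ℝ≥0∞ := fun n x => ENNReal.ofReal (An n x) with hψ
      have hψmeas : ∀ n, Measurable (ψ n) := fun n => (hAmeas n).ennreal_ofReal
      have hψmono : Monotone ψ := by
        intro n m hnm x
        exact ENNReal.ofReal_le_ofReal (hAmono x hnm)
      have hψsup : ∀ x, ⨆ n, ψ n x = ENNReal.ofReal (G x * max (Real.log (G x)) 0) := by
        intro x
        refine iSup_eq_of_tendsto (fun n m hnm => ENNReal.ofReal_le_ofReal (hAmono x hnm)) ?_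
        apply ENNReal.tendsto_ofReal
        apply Tendsto.congr' _ tendsto_const_nhds
        filter_upwards [eventually_ge_atTop ⌈max (Real.log (G x)) 0⌉₊] with n hn
        have : max (Real.log (G x)) 0 ≤ (n:ℝ) := (Nat.le_ceil _).trans (Nat.cast_le.2 hn)
        simp only [hAn]
        rw [min_eq_left this]
      have hsupint : ⨆ n, ∫⁻ x, ψ n x ∂μ = ⊤ := by
        rw [← lintegral_iSup hψmeas hψmono]
        rw [← hkey]
        apply lintegral_congr
        intro x
        exact hψsup x
      obtain ⟨n₀, hn₀⟩ : ∃ n₀, ENNReal.ofReal (r + 3) < ∫⁻ x, ψ n₀ x ∂μ := by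
        apply lt_iSup_iff.1
        rw [hsupint]
        exact ENNReal.ofReal_lt_top
      rw [eventually_atTop]
      refine ⟨n₀, fun n hn => ?_⟩
      have hψn : ENNReal.ofReal (r + 3) < ∫⁻ x, ψ n x ∂μ :=
        hn₀.trans_le (lintegral_mono (fun x => hψmono hn x))
      have hψfin : ∫⁻ x, ψ n x ∂μ ≠ ⊤ := by
        have := (hAint n).2
        rw [hasFiniteIntegral_iff_ofReal (ae_of_all _ (hAnn n))] at this
        exact this.ne
      have hAeq : ∫ x, An n x ∂μ = (∫⁻ x, ψ n x ∂μ).toReal := by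
        rw [integral_eq_lintegral_of_nonneg_ae (ae_of_all _ (hAnn n))
          (hAmeas n).aestronglyMeasurable]
      have hAbig : r + 3 ≤ ∫ x, An n x ∂μ := by
        rw [hAeq]
        have h1 : (ENNReal.ofReal (r + 3)).toReal ≤ (∫⁻ x, ψ n x ∂μ).toReal :=
          ENNReal.toReal_mono hψfin hψn.le
        rwa [ENNReal.toReal_ofReal (by linarith)] at h1
      -- pointwise comparison
      have hPA : ∀ x, An n x - G x - 1 ≤ G x * fn n x := by
        intro x
        by_cases hx : 0 < G x
        · rcases le_or_gt 0 (Real.log (G x)) with hl | hl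
          · have h1 : fn n x = min (Real.log (G x)) (n:ℝ) := by
              simp only [hfn, if_pos hx]
              exact max_eq_right (le_trans (neg_nonpos.2 (Nat.cast_nonneg n))
                (le_min hl (Nat.cast_nonneg n)))
            have h2 : An n x = G x * min (Real.log (G x)) (n:ℝ) := by
              simp only [hAn, max_eq_left hl]
            rw [h1, h2]
            have := hGnn x
            linarith
          · have h2 : An n x = 0 := by
              simp only [hAn]
              rw [max_eq_right hl.le, min_eq_left (Nat.cast_nonneg n), mul_zero]
            have h3 : Real.log (G x) ≤ fn n x := by
              simp only [hfn, if_pos hx]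
              rw [min_eq_left (hl.le.trans (Nat.cast_nonneg n))]
              exact le_max_right _ _
            have h4 : G x * Real.log (G x) ≤ G x * fn n x :=
              mul_le_mul_of_nonneg_left h3 (hGnn x)
            have h5 := sub_one_le_mul_log _ (hGnn x)
            have := hGnn x
            rw [h2]
            linarith
        · have hG0 : G x = 0 := le_antisymm (not_lt.1 hx) (hGnn x)
          simp [hAn, hG0]
      have hGfnint : Integrable (fun x => G x * fn n x) μ := by
        refine (hGint.const_mul (n:ℝ)).mono'
          (hGmeas.mul (hfnmeas n)).aestronglyMeasurable ?_
        filter_upwards with x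
        rw [Real.norm_eq_abs, abs_mul, abs_of_nonneg (hGnn x), mul_comm ((n:ℝ)) (G x)]
        exact mul_le_mul_of_nonneg_left (hfnabs n x) (hGnn x)
      have hmain : ∫ x, An n x ∂μ - 2 ≤ ∫ x, G x * fn n x ∂μ := by
        have h1 : ∫ x, (An n x - G x - 1) ∂μ ≤ ∫ x, G x * fn n x ∂μ :=
          integral_mono (((hAint n).sub hGint).sub (integrable_const 1)) hGfnint hPA
        have hI1 : Integrable (fun x => An n x - G x) μ := (hAint n).sub hGint
        have e1 : ∫ x, (An n x - G x - 1) ∂μ = (∫ x, An n x ∂μ) - 1 - 1 := by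
          rw [integral_sub hI1 (integrable_const 1), integral_sub (hAint n) hGint,
            hGone, integral_const]
          simp
        rw [e1] at h1
        linarith
      linarith
  -- choose n with both properties
  have hlogtend : Tendsto (fun n : ℕ => Real.log (1 + Real.exp (-(n:ℝ)))) atTop (𝓝 0) := by
    have h1 : Tendsto (fun n : ℕ => -(n:ℝ)) atTop atBot :=
      tendsto_neg_atBot_iff.2 tendsto_natCast_atTop_atTop
    have h2 : Tendsto (fun n : ℕ => Real.exp (-(n:ℝ))) atTop (𝓝 0) :=
      Real.tendsto_exp_atBot.comp h1
    have h3 : Tendsto (fun n : ℕ => 1 + Real.exp (-(n:ℝ))) atTop (𝓝 1) := by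
      simpa using h2.const_add 1
    have h4 : Tendsto (fun n : ℕ => Real.log (1 + Real.exp (-(n:ℝ)))) atTop (𝓝 (Real.log 1)) :=
      ((Real.continuousAt_log one_ne_zero).tendsto.comp h3)
    simpa using h4
  obtain ⟨n, hn1, hn2⟩ :=
    (hfinal.and (hlogtend.eventually (gt_mem_nhds (half_pos hε)))).exists
  set c : ℝ := Real.log (1 + Real.exp (-(n:ℝ))) with hcdef
  have hcpos : 0 ≤ c := Real.log_nonneg (le_add_of_nonneg_right (Real.exp_nonneg _))
  have h1expn : (0:ℝ) < 1 + Real.exp (-(n:ℝ)) := by positivity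
  refine ⟨(n:ℝ) + c, fun x => fn n x - c, add_nonneg (Nat.cast_nonneg n) hcpos,
    (hfnmeas n).sub measurable_const, ?_, ?_, ?_⟩
  · intro x
    calc |fn n x - c| ≤ |fn n x| + |c| := abs_sub _ _
    _ ≤ (n:ℝ) + c := add_le_add (hfnabs n x) (by rw [abs_of_nonneg hcpos])
  · have e1 : ∀ x, Real.exp (fn n x - c) = Real.exp (fn n x) * (1 + Real.exp (-(n:ℝ)))⁻¹ := by
      intro x
      rw [Real.exp_sub, hcdef, Real.exp_log h1expn]
      ring
    calc ∫ x, Real.exp (fn n x - c) ∂μ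
        = (∫ x, Real.exp (fn n x) ∂μ) * (1 + Real.exp (-(n:ℝ)))⁻¹ := by
          simp_rw [e1]; rw [integral_mul_const]
    _ ≤ (1 + Real.exp (-(n:ℝ))) * (1 + Real.exp (-(n:ℝ)))⁻¹ :=
          mul_le_mul_of_nonneg_right (hexpbound n) (by positivity)
    _ = 1 := mul_inv_cancel₀ h1expn.ne'
  · rw [integral_sub (hfnint n) (integrable_const c), integral_const]
    simp only [probReal_univ, smul_eq_mul, one_mul]
    rw [htrans n]
    linarith

lemma dual_witness_continuous {d : ℕ} (μ q : Measure (Rd d))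
    [IsProbabilityMeasure μ] [IsProbabilityMeasure q] {r ε : ℝ} (hε : 0 < ε)
    (h : ENNReal.ofReal r ≤ relEnt q μ) :
    ∃ f : BoundedContinuousFunction (Rd d) ℝ,
      (∫ x, Real.exp (f x) ∂μ) ≤ 1 ∧ r - ε < ∫ x, f x ∂q := by
  obtain ⟨M, f₀, hM, hf₀meas, hf₀abs, hf₀exp, hf₀int⟩ :=
    dual_witness_measurable μ q (half_pos hε) h
  set κ : Measure (Rd d) := μ + q with hκ
  have hf₀bdd : Integrable f₀ κ := by
    refine (integrable_const M).mono' hf₀meas.aestronglyMeasurable ?_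
    filter_upwards with x using (by simpa using hf₀abs x)
  set δ : ℝ := min (ε/8) ((ε/8) * Real.exp (-M)) with hδ
  have hδpos : 0 < δ := lt_min (by linarith) (by positivity)
  obtain ⟨g, hg, hgint⟩ := hf₀bdd.exists_boundedContinuous_integral_sub_le hδpos
  -- clamp g to [-M, M]
  set ψfun : Rd d → ℝ := fun x => max (-M) (min (g x) M) with hψfun
  have hψcont : Continuous ψfun := continuous_const.max ((map_continuous g).min continuous_const)
  have hψbdd : ∀ x, |ψfun x| ≤ M := by
    intro x
    rw [abs_le]
    exact ⟨le_max_left _ _, max_le (by linarith) (min_le_right _ _)⟩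
  set ψ : BoundedContinuousFunction (Rd d) ℝ :=
    BoundedContinuousFunction.ofNormedAddCommGroup ψfun hψcont M (fun x => by
      rw [Real.norm_eq_abs]; exact hψbdd x) with hψ
  have hψapp : ∀ x, ψ x = ψfun x := fun x => rfl
  -- L¹ distances
  have hclose : ∀ x, |ψ x - f₀ x| ≤ |f₀ x - g x| := by
    intro x
    rw [hψapp]
    rw [abs_sub_comm (f₀ x) (g x)]
    exact clamp_sub_le (g x) (f₀ x) M (hf₀abs x)
  have hsub_int : Integrable (fun x => |f₀ x - g x|) κ := (hf₀bdd.sub hgint).abs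
  have hμκ : ∀ h' : Rd d → ℝ, (∀ x, 0 ≤ h' x) → Integrable h' κ →
      (∫ x, h' x ∂μ) ≤ ∫ x, h' x ∂κ := by
    intro h' hnn hint
    rw [hκ, integral_add_measure (hint.mono_measure (Measure.le_add_right (le_refl μ)))
      (hint.mono_measure (Measure.le_add_left (le_refl q)))]
    have : 0 ≤ ∫ x, h' x ∂q := integral_nonneg hnn
    linarith
  have hqκ : ∀ h' : Rd d → ℝ, (∀ x, 0 ≤ h' x) → Integrable h' κ →
      (∫ x, h' x ∂q) ≤ ∫ x, h' x ∂κ := by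
    intro h' hnn hint
    rw [hκ, integral_add_measure (hint.mono_measure (Measure.le_add_right (le_refl μ)))
      (hint.mono_measure (Measure.le_add_left (le_refl q)))]
    have : 0 ≤ ∫ x, h' x ∂μ := integral_nonneg hnn
    linarith
  have habs_int : Integrable (fun x => |ψ x - f₀ x|) κ := by
    refine hsub_int.mono' ?_ ?_
    · exact ((ψ.continuous.measurable.sub hf₀meas).abs).aestronglyMeasurable
    · filter_upwards with x
      rw [Real.norm_eq_abs, abs_abs]
      exact hclose x
  have hdistμ : (∫ x, |ψ x - f₀ x| ∂μ) ≤ δ := by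
    calc (∫ x, |ψ x - f₀ x| ∂μ) ≤ ∫ x, |ψ x - f₀ x| ∂κ :=
      hμκ _ (fun x => abs_nonneg _) habs_int
    _ ≤ ∫ x, |f₀ x - g x| ∂κ := integral_mono habs_int hsub_int hclose
    _ ≤ δ := by simpa only [Real.norm_eq_abs] using hg
  have hdistq : (∫ x, |ψ x - f₀ x| ∂q) ≤ δ := by
    calc (∫ x, |ψ x - f₀ x| ∂q) ≤ ∫ x, |ψ x - f₀ x| ∂κ :=
      hqκ _ (fun x => abs_nonneg _) habs_int
    _ ≤ ∫ x, |f₀ x - g x| ∂κ := integral_mono habs_int hsub_int hclose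
    _ ≤ δ := by simpa only [Real.norm_eq_abs] using hg
  -- exp integral bound
  have hψint : ∀ (ν : Measure (Rd d)), IsProbabilityMeasure ν → Integrable (⇑ψ) ν :=
    fun ν _ => ψ.integrable ν
  have hexpψint : Integrable (fun x => Real.exp (ψ x)) μ := by
    refine (integrable_const (Real.exp M)).mono'
      ((ψ.continuous.measurable.exp).aestronglyMeasurable) ?_
    filter_upwards with x
    rw [Real.norm_eq_abs, abs_of_pos (Real.exp_pos _)]
    exact Real.exp_le_exp.2 ((le_abs_self _).trans (hψbdd x))
  have hexpf₀int : Integrable (fun x => Real.exp (f₀ x)) μ := by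
    refine (integrable_const (Real.exp M)).mono'
      ((hf₀meas.exp).aestronglyMeasurable) ?_
    filter_upwards with x
    rw [Real.norm_eq_abs, abs_of_pos (Real.exp_pos _)]
    exact Real.exp_le_exp.2 ((le_abs_self _).trans (hf₀abs x))
  have hexpψ : (∫ x, Real.exp (ψ x) ∂μ) ≤ 1 + Real.exp M * δ := by
    have hdiff : (∫ x, Real.exp (ψ x) ∂μ) - (∫ x, Real.exp (f₀ x) ∂μ)
        ≤ Real.exp M * δ := by
      have h1 : (∫ x, Real.exp (ψ x) ∂μ) - (∫ x, Real.exp (f₀ x) ∂μ)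
          = ∫ x, (Real.exp (ψ x) - Real.exp (f₀ x)) ∂μ :=
        (integral_sub hexpψint hexpf₀int).symm
      rw [h1]
      have h2 : ∀ x, Real.exp (ψ x) - Real.exp (f₀ x) ≤ Real.exp M * |ψ x - f₀ x| := by
        intro x
        have := exp_lipschitz (ψ x) (f₀ x) M (hψbdd x) (hf₀abs x)
        have h3 := le_abs_self (Real.exp (ψ x) - Real.exp (f₀ x))
        linarith
      calc ∫ x, (Real.exp (ψ x) - Real.exp (f₀ x)) ∂μ
          ≤ ∫ x, Real.exp M * |ψ x - f₀ x| ∂μ := by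
            apply integral_mono (hexpψint.sub hexpf₀int) _ h2
            exact (habs_int.mono_measure (Measure.le_add_right (le_refl μ))).const_mul _
      _ = Real.exp M * ∫ x, |ψ x - f₀ x| ∂μ := integral_const_mul _ _
      _ ≤ Real.exp M * δ := mul_le_mul_of_nonneg_left hdistμ (Real.exp_nonneg _)
    linarith
  -- final function
  set c : ℝ := Real.log (1 + Real.exp M * δ) with hc
  have hcpos : 0 ≤ c := Real.log_nonneg (le_add_of_nonneg_right (by positivity))
  have h1c : (0:ℝ) < 1 + Real.exp M * δ := by positivity
  set φ : BoundedContinuousFunction (Rd d) ℝ := ψ - BoundedContinuousFunction.const (Rd d) c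
    with hφ
  have hφapp : ∀ x, φ x = ψ x - c := fun x => rfl
  have hf₀intq : Integrable f₀ q := by
    refine (integrable_const M).mono' hf₀meas.aestronglyMeasurable ?_
    filter_upwards with x using (by simpa using hf₀abs x)
  refine ⟨φ, ?_, ?_⟩
  · have e1 : ∀ x, Real.exp (φ x) = Real.exp (ψ x) * (1 + Real.exp M * δ)⁻¹ := by
      intro x
      rw [hφapp, Real.exp_sub, hc, Real.exp_log h1c]
      ring
    calc ∫ x, Real.exp (φ x) ∂μ
        = (∫ x, Real.exp (ψ x) ∂μ) * (1 + Real.exp M * δ)⁻¹ := by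
          simp_rw [e1]; rw [integral_mul_const]
    _ ≤ (1 + Real.exp M * δ) * (1 + Real.exp M * δ)⁻¹ :=
          mul_le_mul_of_nonneg_right hexpψ (by positivity)
    _ = 1 := mul_inv_cancel₀ h1c.ne'
  · have e2 : ∫ x, φ x ∂q = (∫ x, ψ x ∂q) - c := by
      simp only [hφapp]
      rw [integral_sub (ψ.integrable q) (integrable_const c), integral_const]
      simp
    rw [e2]
    -- ∫ ψ dq ≥ ∫ f₀ dq - δ
    have h5 : (∫ x, f₀ x ∂q) - (∫ x, ψ x ∂q) ≤ δ := by
      have h6 : (∫ x, f₀ x ∂q) - (∫ x, ψ x ∂q) = ∫ x, (f₀ x - ψ x) ∂q :=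
        (integral_sub hf₀intq (ψ.integrable q)).symm
      rw [h6]
      calc ∫ x, (f₀ x - ψ x) ∂q ≤ ∫ x, |ψ x - f₀ x| ∂q := by
            apply integral_mono (hf₀intq.sub (ψ.integrable q))
              (habs_int.mono_measure (Measure.le_add_left (le_refl q)))
            intro x
            show f₀ x - ψ x ≤ |ψ x - f₀ x|
            rw [abs_sub_comm]
            exact le_abs_self _
      _ ≤ δ := hdistq
    have hcle : c ≤ Real.exp M * δ := by
      rw [hc]
      exact log_one_add_le _ (by positivity)
    have hδ1 : δ ≤ ε/8 := min_le_left _ _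
    have hδ2 : Real.exp M * δ ≤ ε/8 := by
      have h9 : δ ≤ (ε/8) * Real.exp (-M) := min_le_right _ _
      have h7 : Real.exp M * δ ≤ Real.exp M * ((ε/8) * Real.exp (-M)) :=
        mul_le_mul_of_nonneg_left h9 (Real.exp_nonneg _)
      have h8 : Real.exp M * ((ε/8) * Real.exp (-M)) = ε/8 := by
        rw [mul_comm (ε/8) (Real.exp (-M)), ← mul_assoc, ← Real.exp_add]
        simp
      linarith
    linarith

lemma uniform_witness {d : ℕ} (μ : Measure (Rd d)) [IsProbabilityMeasure μ]
    (B : Set (ProbabilityMeasure (Rd d))) (hBne : B.Nonempty)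
    (hBconvex : ∀ q₁ ∈ B, ∀ q₂ ∈ B, ∀ a : ℝ≥0∞, a ≤ 1 →
      ∀ q : ProbabilityMeasure (Rd d),
        (q : Measure (Rd d)) = a • (q₁ : Measure (Rd d)) + (1 - a) • (q₂ : Measure (Rd d)) →
        q ∈ B)
    (hBcompact : IsCompact B)
    {r ε : ℝ} (hε : 0 < ε)
    (hr : ∀ q ∈ B, ENNReal.ofReal r ≤ relEnt (q : Measure (Rd d)) μ) :
    ∃ f : BoundedContinuousFunction (Rd d) ℝ, (∫ x, Real.exp (f x) ∂μ) ≤ 1 ∧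
      ∀ q ∈ B, r - ε ≤ ∫ x, f x ∂(q : Measure (Rd d)) := by
  -- choose a witness for every element of B
  have hchoice : ∀ q : B, ∃ f : BoundedContinuousFunction (Rd d) ℝ,
      (∫ x, Real.exp (f x) ∂μ) ≤ 1 ∧ r - ε/2 < ∫ x, f x ∂((q : ProbabilityMeasure (Rd d)) :
        Measure (Rd d)) :=
    fun q => dual_witness_continuous μ _ (half_pos hε) (hr _ q.2)
  choose F hF1 hF2 using hchoice
  -- open cover
  set U : B → Set (ProbabilityMeasure (Rd d)) := fun i =>
    (fun p : ProbabilityMeasure (Rd d) => ∫ x, F i x ∂(p : Measure (Rd d))) ⁻¹'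
      (Ioi (r - ε/2)) with hU
  have hUopen : ∀ i, IsOpen (U i) := fun i =>
    isOpen_Ioi.preimage (ProbabilityMeasure.continuous_integral_boundedContinuousFunction (F i))
  have hUcover : B ⊆ ⋃ i, U i := by
    intro p hp
    exact mem_iUnion.2 ⟨⟨p, hp⟩, hF2 ⟨p, hp⟩⟩
  obtain ⟨t, ht⟩ := hBcompact.elim_finite_subcover U hUopen hUcover
  -- the evaluation map into ℝ^t
  set A : ProbabilityMeasure (Rd d) → (↥t → ℝ) :=
    fun p i => ∫ x, F i.1 x ∂(p : Measure (Rd d)) with hA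
  have hAcont : Continuous A :=
    continuous_pi fun i =>
      ProbabilityMeasure.continuous_integral_boundedContinuousFunction (F i.1)
  set S : Set (↥t → ℝ) := A '' B with hS
  have hScomp : IsCompact S := hBcompact.image hAcont
  have hSconv : Convex ℝ S := by
    rintro x ⟨p₁, hp₁, rfl⟩ y ⟨p₂, hp₂, rfl⟩ a b ha hb hab
    set α : ℝ≥0∞ := ENNReal.ofReal a with hα
    have hα1 : α ≤ 1 := by
      rw [hα, ← ENNReal.ofReal_one]
      exact ENNReal.ofReal_le_ofReal (by linarith)
    have hbeq : (1:ℝ≥0∞) - α = ENNReal.ofReal b := by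
      rw [hα, ← ENNReal.ofReal_one, ← ENNReal.ofReal_sub _ ha]
      congr 1
      linarith
    set m : Measure (Rd d) := α • (p₁ : Measure (Rd d)) + (1 - α) • (p₂ : Measure (Rd d))
      with hm
    have hmprob : IsProbabilityMeasure m := by
      constructor
      rw [hm]
      simp only [Measure.add_apply, Measure.smul_apply, smul_eq_mul, measure_univ, mul_one]
      rw [hbeq, hα, ← ENNReal.ofReal_add ha hb, hab, ENNReal.ofReal_one]
    set pm : ProbabilityMeasure (Rd d) := ⟨m, hmprob⟩ with hpm
    have hpmB : pm ∈ B := hBconvex p₁ hp₁ p₂ hp₂ α hα1 pm rfl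
    refine ⟨pm, hpmB, ?_⟩
    funext i
    have hint1 : Integrable (⇑(F i)) ((p₁ : Measure (Rd d))) := (F i).integrable _
    have hint2 : Integrable (⇑(F i)) ((p₂ : Measure (Rd d))) := (F i).integrable _
    show ∫ x, F i x ∂m = a • (A p₁) i + b • (A p₂) i
    rw [hm, integral_add_measure (hint1.smul_measure (by rw [hα]; exact ENNReal.ofReal_ne_top))
      (hint2.smul_measure (by rw [hbeq]; exact ENNReal.ofReal_ne_top)),
      integral_smul_measure, integral_smul_measure, hbeq, hα,
      ENNReal.toReal_ofReal ha, ENNReal.toReal_ofReal hb]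
  -- the forbidden corner
  set CC : Set (↥t → ℝ) := {v | ∀ i, v i ≤ r - ε} with hCC
  have hCCeq : CC = ⋂ i, {v : ↥t → ℝ | v i ≤ r - ε} := by
    ext v; simp [hCC, Set.mem_iInter]
  have hCclosed : IsClosed CC := by
    rw [hCCeq]
    exact isClosed_iInter fun i => isClosed_le (continuous_apply i) continuous_const
  have hCconv : Convex ℝ CC := by
    rw [hCCeq]
    exact convex_iInter fun i => convex_halfSpace_le ⟨fun a b => rfl, fun c a => rfl⟩ _
  have hdisj : Disjoint S CC := by
    rw [Set.disjoint_left]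
    rintro v ⟨p, hp, rfl⟩ hvC
    obtain ⟨i, hit, hpU⟩ := mem_iUnion₂.1 (ht hp)
    have h1 : r - ε/2 < A p ⟨i, hit⟩ := hpU
    have h2 : A p ⟨i, hit⟩ ≤ r - ε := hvC ⟨i, hit⟩
    linarith
  obtain ⟨φ, u, v', hφS, huv, hφC⟩ :=
    geometric_hahn_banach_compact_closed hSconv hScomp hCconv hCclosed hdisj
  -- representation of φ
  set cvec : ↥t → ℝ := fun i => φ (Pi.single i 1) with hcvec
  have hrep : ∀ x : ↥t → ℝ, φ x = ∑ i, x i * cvec i := by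
    intro x
    have hx : x = ∑ i : ↥t, x i • (Pi.single i (1:ℝ) : ↥t → ℝ) := by
      funext j
      simp only [Finset.sum_apply, Pi.smul_apply, Pi.single_apply, smul_eq_mul]
      simp [Finset.sum_ite_eq']
    conv_lhs => rw [hx]
    rw [map_sum]
    congr 1
    funext i
    rw [_root_.map_smul]
    simp [hcvec, smul_eq_mul]
  -- the coefficients are nonpositive
  have hcnp : ∀ i, cvec i ≤ 0 := by
    intro i
    by_contra hpos
    push_neg at hpos
    obtain ⟨s, hsgt'⟩ := exists_gt (max 0 ((φ (fun _ => r - ε) - v') / cvec i))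
    have hs0 : 0 ≤ s := le_of_lt (lt_of_le_of_lt (le_max_left _ _) hsgt')
    have hsgt : (φ (fun _ => r - ε) - v') / cvec i < s :=
      lt_of_le_of_lt (le_max_right _ _) hsgt'
    have hyC : (fun j => (r - ε) - s * ((Pi.single i (1:ℝ) : ↥t → ℝ) j)) ∈ CC := by
      intro j
      show (r - ε) - s * ((Pi.single i (1:ℝ) : ↥t → ℝ) j) ≤ r - ε
      rcases eq_or_ne j i with hji | hji
      · subst hji
        rw [Pi.single_eq_same, mul_one]
        linarith
      · rw [Pi.single_eq_of_ne hji, mul_zero]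
        linarith
    have h1 : v' < φ (fun j => (r - ε) - s * ((Pi.single i (1:ℝ) : ↥t → ℝ) j)) := hφC _ hyC
    have h2 : φ (fun j => (r - ε) - s * ((Pi.single i (1:ℝ) : ↥t → ℝ) j))
        = φ (fun _ => r - ε) - s * cvec i := by
      have he : (fun j => (r - ε) - s * ((Pi.single i (1:ℝ) : ↥t → ℝ) j))
          = (fun _ : ↥t => r - ε) - s • (Pi.single i (1:ℝ) : ↥t → ℝ) := by
        funext j
        simp [Pi.smul_apply, smul_eq_mul]
      rw [he, map_sub, _root_.map_smul]
      simp [hcvec, smul_eq_mul]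
    have h3 : φ (fun _ => r - ε) - v' < s * cvec i := (div_lt_iff₀ hpos).1 hsgt
    linarith
  -- total weight is positive
  obtain ⟨q₀, hq₀⟩ := hBne
  set W : ℝ := ∑ i, (-cvec i) with hW
  have hWnn : 0 ≤ W := Finset.sum_nonneg fun i _ => by have := hcnp i; linarith
  have hWpos : 0 < W := by
    rcases hWnn.lt_or_eq with h | h
    · exact h
    · exfalso
      have hall : ∀ i : ↥t, cvec i = 0 := by
        intro i
        have h5 := (Finset.sum_eq_zero_iff_of_nonneg
          (fun j (_ : j ∈ Finset.univ) => by have := hcnp j; linarith :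
            ∀ j ∈ Finset.univ, 0 ≤ -cvec j)).1 (by rw [← hW, ← h]) i (Finset.mem_univ i)
        linarith
      have hzero : ∀ x, φ x = 0 := by
        intro x
        rw [hrep]
        simp [hall]
      have hSu : φ (A q₀) < u := hφS _ ⟨q₀, hq₀, rfl⟩
      have hCv : v' < φ (fun _ => r - ε) := hφC _ (fun i => le_refl _)
      rw [hzero] at hSu hCv
      linarith
  -- normalized weights
  set lam : ↥t → ℝ := fun i => (-cvec i) / W with hlam
  have hlamnn : ∀ i, 0 ≤ lam i := fun i =>
    div_nonneg (by have := hcnp i; linarith) hWnn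
  have hlamsum : ∑ i, lam i = 1 := by
    rw [hlam, ← Finset.sum_div, ← hW, div_self hWpos.ne']
  -- the key lower bound on B
  have hkey : ∀ p ∈ B, r - ε < ∑ i, lam i * A p i := by
    intro p hp
    have h1 : φ (A p) < u := hφS _ ⟨p, hp, rfl⟩
    have h2 : v' < φ (fun _ => r - ε) := hφC _ (fun i => le_refl _)
    rw [hrep] at h1 h2
    have h1' : ∑ i, A p i * cvec i < u := h1
    have h2' : v' < ∑ i, (r - ε) * cvec i := by simpa using h2
    have h3 : ∑ i, A p i * cvec i < ∑ i, (r - ε) * cvec i := by linarith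
    have e3 : ∑ i, lam i * A p i = (∑ i, A p i * (-cvec i)) / W := by
      rw [Finset.sum_div]
      congr 1
      funext i
      rw [hlam]
      ring
    rw [e3, lt_div_iff₀ hWpos]
    have e4 : (r - ε) * W = ∑ i, (r - ε) * (-cvec i) := by
      rw [hW, Finset.mul_sum]
    rw [e4]
    have e5 : ∑ i, A p i * (-cvec i) = -∑ i, A p i * cvec i := by
      rw [← Finset.sum_neg_distrib]
      congr 1
      funext i
      ring
    have e6 : ∑ i, (r - ε) * (-cvec i) = -∑ i, (r - ε) * cvec i := by
      rw [← Finset.sum_neg_distrib]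
      congr 1
      funext i
      ring
    rw [e5, e6]
    linarith
  -- the final function
  set f : BoundedContinuousFunction (Rd d) ℝ := ∑ i, lam i • F i.1 with hf
  have hfapp : ∀ x, f x = ∑ i, lam i * F i.1 x := by
    intro x
    rw [hf]
    simp [BoundedContinuousFunction.coe_sum, Finset.sum_apply,
      BoundedContinuousFunction.coe_smul, smul_eq_mul]
  refine ⟨f, ?_, ?_⟩
  · -- Hölder inequality
    have hexpfint : Integrable (fun x => Real.exp (f x)) μ := by
      refine (integrable_const (Real.exp ‖f‖)).mono'
        ((Real.continuous_exp.comp f.continuous).measurable).aestronglyMeasurable ?_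
      filter_upwards with x
      rw [Real.norm_eq_abs, abs_of_pos (Real.exp_pos _)]
      exact Real.exp_le_exp.2 ((le_abs_self _).trans (f.norm_coe_le_norm x))
    have e0 : ENNReal.ofReal (∫ x, Real.exp (f x) ∂μ)
        = ∫⁻ x, ENNReal.ofReal (Real.exp (f x)) ∂μ :=
      ofReal_integral_eq_lintegral_ofReal hexpfint
        (ae_of_all _ fun x => (Real.exp_pos _).le)
    have hpt : ∀ x, ENNReal.ofReal (Real.exp (f x)) =
        ∏ i, (ENNReal.ofReal (Real.exp (F i.1 x))) ^ (lam i) := by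
      intro x
      rw [hfapp x]
      rw [Real.exp_sum]
      have e1 : ∀ i : ↥t, Real.exp (lam i * F i.1 x)
          = (Real.exp (F i.1 x)) ^ (lam i) := by
        intro i
        rw [mul_comm, Real.exp_mul]
      simp_rw [e1]
      rw [ENNReal.ofReal_prod_of_nonneg
        (fun i _ => Real.rpow_nonneg (Real.exp_nonneg _) _)]
      exact Finset.prod_congr rfl fun i _ => (ENNReal.ofReal_rpow_of_pos (Real.exp_pos _)).symm
    have hH := ENNReal.lintegral_prod_norm_pow_le (μ := μ) Finset.univ
      (f := fun (i : ↥t) x => ENNReal.ofReal (Real.exp (F i.1 x)))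
      (fun i _ => ((Real.continuous_exp.comp
        (F i.1).continuous).measurable.ennreal_ofReal).aemeasurable)
      (p := lam) hlamsum (fun i _ => hlamnn i)
    have hone : ∀ i : ↥t, ∫⁻ x, ENNReal.ofReal (Real.exp (F i.1 x)) ∂μ ≤ 1 := by
      intro i
      have hint : Integrable (fun x => Real.exp (F i.1 x)) μ := by
        refine (integrable_const (Real.exp ‖F i.1‖)).mono'
          ((Real.continuous_exp.comp (F i.1).continuous).measurable).aestronglyMeasurable ?_
        filter_upwards with x
        rw [Real.norm_eq_abs, abs_of_pos (Real.exp_pos _)]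
        exact Real.exp_le_exp.2 ((le_abs_self _).trans ((F i.1).norm_coe_le_norm x))
      rw [← ofReal_integral_eq_lintegral_ofReal hint
        (ae_of_all _ fun x => (Real.exp_nonneg _))]
      calc ENNReal.ofReal (∫ x, Real.exp (F i.1 x) ∂μ)
          ≤ ENNReal.ofReal 1 := ENNReal.ofReal_le_ofReal (hF1 i)
      _ = 1 := ENNReal.ofReal_one
    rw [← ENNReal.ofReal_le_one, e0]
    calc ∫⁻ x, ENNReal.ofReal (Real.exp (f x)) ∂μ
        = ∫⁻ x, ∏ i, (ENNReal.ofReal (Real.exp (F i.1 x))) ^ (lam i) ∂μ := by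
          apply lintegral_congr
          intro x
          exact hpt x
    _ ≤ ∏ i, (∫⁻ x, ENNReal.ofReal (Real.exp (F i.1 x)) ∂μ) ^ (lam i) := hH
    _ ≤ 1 := Finset.prod_le_one (fun i _ => zero_le)
          (fun i _ => ENNReal.rpow_le_one (hone i) (hlamnn i))
  · -- lower bound on B
    intro p hp
    have e7 : ∫ x, f x ∂(p : Measure (Rd d)) = ∑ i, lam i * A p i := by
      calc ∫ x, f x ∂(p : Measure (Rd d))
          = ∫ x, (∑ i, lam i * F i.1 x) ∂(p : Measure (Rd d)) := by
            congr 1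
            funext x
            exact hfapp x
      _ = ∑ i, ∫ x, lam i * F i.1 x ∂(p : Measure (Rd d)) := by
            apply integral_finset_sum
            intro i _
            exact ((F i.1).integrable _).const_mul _
      _ = ∑ i, lam i * A p i := by
            congr 1
            funext i
            rw [integral_const_mul]
    rw [e7]
    exact (hkey p hp).le

lemma chernoff_step {d : ℕ} (μ : Measure (Rd d)) [IsProbabilityMeasure μ]
    {Ω : Type} [MeasurableSpace Ω] (P : Measure Ω) [IsProbabilityMeasure P]
    {N : ℕ} (X : Fin N → Ω → Rd d) (hX : ∀ i, Measurable (X i))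
    (hind : iIndepFun X P) (hlaw : ∀ i, P.map (X i) = μ)
    (f : BoundedContinuousFunction (Rd d) ℝ) (hf1 : (∫ x, Real.exp (f x) ∂μ) ≤ 1) (c : ℝ) :
    P {ω | (N : ℝ) * c ≤ ∑ i, f (X i ω)} ≤ ENNReal.ofReal (Real.exp (-(N : ℝ) * c)) := by
  set Y : Fin N → Ω → ℝ := fun i ω => f (X i ω) with hY
  have hYmeas : ∀ i, Measurable (Y i) := fun i => (f.continuous.measurable).comp (hX i)
  have hYind : iIndepFun Y P :=
    hind.comp (fun _ => (f : Rd d → ℝ)) (fun _ => f.continuous.measurable)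
  set S : Ω → ℝ := fun ω => ∑ i, Y i ω with hS
  have hSmeas : Measurable S := by
    apply Finset.measurable_sum
    intro i _; exact hYmeas i
  -- integrability of exp(1 * S)
  have hSbound : ∀ ω, |S ω| ≤ (N : ℝ) * ‖f‖ := by
    intro ω
    calc |S ω| ≤ ∑ i : Fin N, |Y i ω| := Finset.abs_sum_le_sum_abs _ _
    _ ≤ ∑ _i : Fin N, ‖f‖ := by
        apply Finset.sum_le_sum; intro i _
        exact f.norm_coe_le_norm (X i ω)
    _ = (N : ℝ) * ‖f‖ := by simp [mul_comm]
  have h_int : Integrable (fun ω => Real.exp (1 * S ω)) P := by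
    refine (integrable_const (Real.exp ((N : ℝ) * ‖f‖))).mono' ?_ ?_
    · exact ((hSmeas.const_mul 1).exp).aestronglyMeasurable
    · filter_upwards with ω
      rw [Real.norm_eq_abs, abs_of_pos (Real.exp_pos _), one_mul]
      exact Real.exp_le_exp.2 ((le_abs_self _).trans (hSbound ω))
  have hmarkov := measure_ge_le_exp_mul_mgf (μ := P) (X := S) ((N : ℝ) * c) zero_le_one h_int
  have hmgfS : mgf S P 1 = ∏ i : Fin N, mgf (Y i) P 1 := by
    have h := hYind.mgf_sum (t := 1) hYmeas Finset.univ
    rw [← h]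
    congr 1
    ext ω
    simp [hS, Finset.sum_apply]
  have hmgfY : ∀ i, mgf (Y i) P 1 = ∫ x, Real.exp (f x) ∂μ := by
    intro i
    rw [mgf]
    simp only [one_mul]
    rw [← hlaw i, integral_map (hX i).aemeasurable]
    exact (Real.continuous_exp.comp f.continuous).aestronglyMeasurable
  have hprod : ∏ i : Fin N, mgf (Y i) P 1 ≤ 1 := by
    apply Finset.prod_le_one
    · intro i _; exact mgf_nonneg
    · intro i _; rw [hmgfY i]; exact hf1
  have h2 : (P {ω | (N : ℝ) * c ≤ S ω}).toReal ≤ Real.exp (-(N : ℝ) * c) := by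
    calc (P {ω | (N : ℝ) * c ≤ S ω}).toReal
        ≤ Real.exp (-1 * ((N : ℝ) * c)) * mgf S P 1 := hmarkov
    _ ≤ Real.exp (-1 * ((N : ℝ) * c)) * 1 := by
        apply mul_le_mul_of_nonneg_left _ (Real.exp_nonneg _)
        rw [hmgfS]; exact hprod
    _ = Real.exp (-(N : ℝ) * c) := by rw [mul_one]; ring_nf
  rw [ENNReal.le_ofReal_iff_toReal_le (measure_ne_top _ _) (Real.exp_nonneg _)]
  exact h2

/-- Sanov-type upper bound (2.13): for i.i.d. samples of a probability measure supported in
the ball `B_R`, the probability that the empirical measure lies in a convex, weakly compact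
set `B` of probability measures on `B_R` is at most `exp(-N inf_{ν ∈ B} H(ν|μ_R))`. -/
theorem sanov_upper_bound_convex_compact (d : ℕ) (R : ℝ)
    (μR : Measure (Rd d)) [IsProbabilityMeasure μR]
    (hμR : μR (closedBall (0 : Rd d) R)ᶜ = 0)
    (B : Set (ProbabilityMeasure (Rd d)))
    (hBsupp : ∀ q ∈ B, (q : Measure (Rd d)) (closedBall (0 : Rd d) R)ᶜ = 0)
    (hBconvex : ∀ q₁ ∈ B, ∀ q₂ ∈ B, ∀ a : ℝ≥0∞, a ≤ 1 →
      ∀ q : ProbabilityMeasure (Rd d),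
        (q : Measure (Rd d)) = a • (q₁ : Measure (Rd d)) + (1 - a) • (q₂ : Measure (Rd d)) →
        q ∈ B)
    (hBcompact : IsCompact B)
    (Ω : Type) (_ : MeasurableSpace Ω) (P : Measure Ω) [IsProbabilityMeasure P]
    (N : ℕ) (X : Fin N → Ω → Rd d) (hX : ∀ i, Measurable (X i))
    (hind : iIndepFun X P) (hlaw : ∀ i, P.map (X i) = μR)
    (r : ℝ) (hr : ∀ q ∈ B, ENNReal.ofReal r ≤ relEnt (q : Measure (Rd d)) μR) :
    P {ω | ∃ q : ProbabilityMeasure (Rd d), (q : Measure (Rd d)) = empMeas X ω ∧ q ∈ B} ≤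
      ENNReal.ofReal (Real.exp (-(N : ℝ) * r)) := by
  by_cases hN : N = 0
  · subst hN
    have hempty : {ω | ∃ q : ProbabilityMeasure (Rd d),
        (q : Measure (Rd d)) = empMeas X ω ∧ q ∈ B} = ∅ := by
      ext ω
      simp only [mem_setOf_eq, mem_empty_iff_false, iff_false, not_exists]
      rintro q ⟨hq, -⟩
      have hzero : empMeas X ω = 0 := by
        simp [empMeas]
      rw [hzero] at hq
      have h1 : (q : Measure (Rd d)) univ = 1 := measure_univ
      rw [hq] at h1
      simp at h1
    rw [hempty, measure_empty]
    exact zero_le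
  by_cases hr0 : r ≤ 0
  · calc P {ω | ∃ q : ProbabilityMeasure (Rd d),
        (q : Measure (Rd d)) = empMeas X ω ∧ q ∈ B} ≤ 1 := prob_le_one
    _ ≤ ENNReal.ofReal (Real.exp (-(N : ℝ) * r)) := by
        rw [← ENNReal.ofReal_one]
        apply ENNReal.ofReal_le_ofReal
        apply Real.one_le_exp
        have : (0:ℝ) ≤ (N:ℝ) * (-r) := mul_nonneg (Nat.cast_nonneg N) (by linarith)
        linarith [this]
  rcases Set.eq_empty_or_nonempty B with hBe | hBne
  · have hempty : {ω | ∃ q : ProbabilityMeasure (Rd d),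
        (q : Measure (Rd d)) = empMeas X ω ∧ q ∈ B} = ∅ := by
      ext ω
      simp only [mem_setOf_eq, mem_empty_iff_false, iff_false, not_exists]
      rintro q ⟨-, hqB⟩
      rw [hBe] at hqB
      exact hqB
    rw [hempty, measure_empty]
    exact zero_le
  -- main case
  have hNpos : (0:ℝ) < N := by
    have := Nat.pos_of_ne_zero hN
    exact_mod_cast this
  have hmain : ∀ ε : ℝ, 0 < ε →
      P {ω | ∃ q : ProbabilityMeasure (Rd d),
        (q : Measure (Rd d)) = empMeas X ω ∧ q ∈ B} ≤
      ENNReal.ofReal (Real.exp (-(N : ℝ) * (r - ε))) := by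
    intro ε hε
    obtain ⟨f, hf1, hf2⟩ := uniform_witness μR B hBne hBconvex hBcompact hε hr
    have hsubset : {ω | ∃ q : ProbabilityMeasure (Rd d),
        (q : Measure (Rd d)) = empMeas X ω ∧ q ∈ B} ⊆
        {ω | (N : ℝ) * (r - ε) ≤ ∑ i, f (X i ω)} := by
      rintro ω ⟨q, hq, hqB⟩
      have h := hf2 q hqB
      have hemp : ∫ x, f x ∂(empMeas X ω) = (N:ℝ)⁻¹ * ∑ i, f (X i ω) := by
        rw [empMeas, integral_smul_measure,
          integral_finset_sum_measure (fun i _ => f.integrable _)]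
        simp only [integral_dirac]
        rw [ENNReal.toReal_inv, ENNReal.toReal_natCast, smul_eq_mul]
      rw [hq, hemp] at h
      show (N : ℝ) * (r - ε) ≤ ∑ i, f (X i ω)
      calc (N : ℝ) * (r - ε) ≤ (N:ℝ) * ((N:ℝ)⁻¹ * ∑ i, f (X i ω)) :=
        mul_le_mul_of_nonneg_left h hNpos.le
      _ = ∑ i, f (X i ω) := by field_simp
    calc P {ω | ∃ q : ProbabilityMeasure (Rd d),
        (q : Measure (Rd d)) = empMeas X ω ∧ q ∈ B}
        ≤ P {ω | (N : ℝ) * (r - ε) ≤ ∑ i, f (X i ω)} := measure_mono hsubset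
    _ ≤ ENNReal.ofReal (Real.exp (-(N : ℝ) * (r - ε))) :=
        chernoff_step μR P X hX hind hlaw f hf1 (r - ε)
  -- pass to the limit ε → 0⁺
  have hcont : Continuous fun ε : ℝ => ENNReal.ofReal (Real.exp (-(N:ℝ) * (r - ε))) := by
    apply ENNReal.continuous_ofReal.comp
    apply Real.continuous_exp.comp
    continuity
  have htt : Tendsto (fun ε : ℝ => ENNReal.ofReal (Real.exp (-(N:ℝ) * (r - ε)))) (𝓝[>] (0:ℝ))
      (𝓝 (ENNReal.ofReal (Real.exp (-(N:ℝ) * r)))) := by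
    have h1 := (hcont.tendsto 0).mono_left (nhdsWithin_le_nhds (s := Ioi (0:ℝ)))
    simpa using h1
  exact ge_of_tendsto htt (eventually_nhdsWithin_of_forall (fun ε hε => hmain ε hε))
end
end

section
/- Let p ∈ [1,2] and let μ be a probability measure on ℝ^d satisfying T_p(λ), and let α < λ/2 so that E_α = ∫ e^{α|x|²} dμ(x) < ∞. Let μ_R = 𝟙_{B_R} μ / μ[B_R] be the normalized restriction of μ to the closed ball B_R of radius R centered at the origin. Then for any λ₁ < λ there exist constants K and R₀ (depending on p, λ, λ₁, α, E_α) such that for all R ≥ R₀ and every probability measure ν on B_R, H(ν | μ_R) ≥ (λ₁/2) · W_p(μ_R, ν)² − K R² e^{−α R²}. -/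
open MeasureTheory ProbabilityTheory Metric Set
open scoped ENNReal NNReal Classical

noncomputable section

variable {d : ℕ} {p : ℝ}

lemma WpSet_nonneg {μ ν : Measure (Rd d)} {c : ℝ}
    (hc : c ∈ { c : ℝ | ∃ π : Measure (Rd d × Rd d), IsProbabilityMeasure π ∧
      π.map Prod.fst = μ ∧ π.map Prod.snd = ν ∧
      c = (∫ z, dist z.1 z.2 ^ p ∂π) ^ (1 / p) }) : 0 ≤ c := by
  obtain ⟨π, _, _, _, rfl⟩ := hc
  exact Real.rpow_nonneg (integral_nonneg fun z => Real.rpow_nonneg dist_nonneg p) _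

lemma WpSet_bddBelow (μ ν : Measure (Rd d)) :
    BddBelow { c : ℝ | ∃ π : Measure (Rd d × Rd d), IsProbabilityMeasure π ∧
      π.map Prod.fst = μ ∧ π.map Prod.snd = ν ∧
      c = (∫ z, dist z.1 z.2 ^ p ∂π) ^ (1 / p) } :=
  ⟨0, fun _ hc => WpSet_nonneg hc⟩

lemma WpSet_nonempty (μ ν : Measure (Rd d)) [IsProbabilityMeasure μ] [IsProbabilityMeasure ν] :
    Set.Nonempty { c : ℝ | ∃ π : Measure (Rd d × Rd d), IsProbabilityMeasure π ∧
      π.map Prod.fst = μ ∧ π.map Prod.snd = ν ∧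
      c = (∫ z, dist z.1 z.2 ^ p ∂π) ^ (1 / p) } := by
  refine ⟨_, μ.prod ν, inferInstance, ?_, ?_, rfl⟩
  · rw [Measure.map_fst_prod]; simp
  · rw [Measure.map_snd_prod]; simp

lemma Wp_nonneg (μ ν : Measure (Rd d)) : 0 ≤ Wp p μ ν :=
  Real.sInf_nonneg fun _ hc => WpSet_nonneg hc

lemma rpow_add_rpow_le_add' {x y : ℝ} (hx : 0 ≤ x) (hy : 0 ≤ y) (hp : 1 ≤ p) :
    (x ^ p + y ^ p) ^ (1/p) ≤ x + y := by
  have h := NNReal.rpow_add_rpow_le (x.toNNReal) (y.toNNReal) one_pos hp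
  simp only [NNReal.rpow_one, one_div_one] at h
  have := NNReal.coe_le_coe.mpr h
  push_cast at this
  rwa [Real.coe_toNNReal x hx, Real.coe_toNNReal y hy] at this

lemma Wp_truncation_bound (hp1 : 1 ≤ p) {R : ℝ} (hR : 0 ≤ R)
    (μ ν : Measure (Rd d)) [IsProbabilityMeasure μ] [IsProbabilityMeasure ν]
    (hν : ν (closedBall (0 : Rd d) R)ᶜ = 0)
    (hmom : Integrable (fun x => (‖x‖ + R) ^ p) μ)
    (hc0 : μ (closedBall (0 : Rd d) R) ≠ 0) :
    Wp p ((μ (closedBall (0 : Rd d) R))⁻¹ • μ.restrict (closedBall (0 : Rd d) R)) ν ≤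
      Wp p ν μ + 2 * R * ((μ (closedBall (0 : Rd d) R)ᶜ).toReal) ^ (1/p) := by
  have hp0 : 0 < p := lt_of_lt_of_le one_pos hp1
  set B : Set (Rd d) := closedBall (0 : Rd d) R with hBdef
  have hBm : MeasurableSet B := measurableSet_closedBall
  set μR : Measure (Rd d) := (μ B)⁻¹ • μ.restrict B with hμRdef
  haveI hμRprob : IsProbabilityMeasure μR := by
    constructor
    simp only [hμRdef, Measure.smul_apply, Measure.restrict_apply_univ, smul_eq_mul]
    exact ENNReal.inv_mul_cancel hc0 (measure_ne_top μ B)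
  set m' : ℝ := (μ Bᶜ).toReal with hm'def
  have hm'nn : 0 ≤ m' := ENNReal.toReal_nonneg
  set Δ : ℝ := 2 * R * m' ^ (1/p) with hΔdef
  have hΔnn : 0 ≤ Δ := by positivity
  -- key step: for every coupling of (ν, μ), bound Wp p μR ν
  have key : ∀ c₀ ∈ { c : ℝ | ∃ π : Measure (Rd d × Rd d), IsProbabilityMeasure π ∧
      π.map Prod.fst = ν ∧ π.map Prod.snd = μ ∧
      c = (∫ z, dist z.1 z.2 ^ p ∂π) ^ (1 / p) }, Wp p μR ν ≤ c₀ + Δ := by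
    rintro c₀ ⟨π, hπprob, hπ1, hπ2, hc₀eq⟩
    have hc₀nn : 0 ≤ c₀ := hc₀eq ▸
      Real.rpow_nonneg (integral_nonneg fun z => Real.rpow_nonneg dist_nonneg p) _
    set σ : Measure (Rd d × Rd d) := π.map Prod.swap with hσdef
    haveI : IsProbabilityMeasure σ := Measure.isProbabilityMeasure_map measurable_swap.aemeasurable
    have hσ1 : σ.map Prod.fst = μ := by
      rw [hσdef, Measure.map_map measurable_fst measurable_swap]
      exact hπ2
    have hσ2 : σ.map Prod.snd = ν := by
      rw [hσdef, Measure.map_map measurable_snd measurable_swap]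
      exact hπ1
    set T : Set (Rd d × Rd d) := Prod.fst ⁻¹' B with hTdef
    have hTm : MeasurableSet T := measurable_fst hBm
    set σ₁ : Measure (Rd d × Rd d) := σ.restrict T with hσ₁def
    set σ₂ : Measure (Rd d × Rd d) := σ.restrict Tᶜ with hσ₂def
    set ν₂ : Measure (Rd d) := σ₂.map Prod.snd with hν₂def
    have hσ₁fst : σ₁.map Prod.fst = μ.restrict B := by
      have h := Measure.restrict_map (μ := σ) measurable_fst hBm
      rw [hσ1] at h
      exact h.symm
    have hν₂univ : ν₂ univ = μ Bᶜ := by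
      rw [hν₂def, Measure.map_apply measurable_snd MeasurableSet.univ, preimage_univ,
        hσ₂def, Measure.restrict_apply_univ]
      have hTc : Tᶜ = Prod.fst ⁻¹' Bᶜ := rfl
      rw [hTc, ← Measure.map_apply measurable_fst hBm.compl, hσ1]
    haveI : IsFiniteMeasure ν₂ := ⟨by rw [hν₂univ]; exact measure_lt_top μ _⟩
    set τ : Measure (Rd d × Rd d) := μR.prod ν₂ with hτdef
    set π' : Measure (Rd d × Rd d) := σ₁ + τ with hπ'def
    have hsmulB : (μ B) • μR = μ.restrict B := by
      rw [hμRdef, smul_smul, ENNReal.mul_inv_cancel hc0 (measure_ne_top _ _), one_smul]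
    have hfst : π'.map Prod.fst = μR := by
      rw [hπ'def, Measure.map_add _ _ measurable_fst, hσ₁fst, hτdef, Measure.map_fst_prod,
        hν₂univ, ← hsmulB, ← add_smul, measure_add_measure_compl hBm, measure_univ, one_smul]
    have hsnd : π'.map Prod.snd = ν := by
      rw [hπ'def, Measure.map_add _ _ measurable_snd, hτdef, Measure.map_snd_prod,
        measure_univ, one_smul, hν₂def, ← Measure.map_add _ _ measurable_snd,
        hσ₁def, hσ₂def, Measure.restrict_add_restrict_compl hTm, hσ2]
    haveI hπ'prob : IsProbabilityMeasure π' := by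
      constructor
      have h := congrArg (fun τ' : Measure (Rd d) => τ' univ) hfst
      rw [Measure.map_apply measurable_fst MeasurableSet.univ, preimage_univ] at h
      rw [h]; exact measure_univ
    set f : Rd d × Rd d → ℝ := fun z => dist z.1 z.2 ^ p with hfdef
    have hfcont : Continuous f := by
      apply (continuous_fst.dist continuous_snd).rpow_const
      exact fun x => Or.inr hp0.le
    have hfnn : ∀ z, 0 ≤ f z := fun z => Real.rpow_nonneg dist_nonneg p
    -- σ-a.e. the second coordinate is in B
    have hsnd0 : σ (Prod.snd ⁻¹' Bᶜ) = 0 := by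
      rw [← Measure.map_apply measurable_snd hBm.compl, hσ2]; exact hν
    have haeB : ∀ᵐ z ∂σ, z.2 ∈ B := by
      rw [ae_iff]
      convert hsnd0 using 2
      rfl
    -- integrability of f w.r.t. σ
    have hg₁int : Integrable (fun z : Rd d × Rd d => (‖z.1‖ + R) ^ p) σ := by
      have h1 : Integrable (fun x : Rd d => (‖x‖ + R) ^ p) (σ.map Prod.fst) := by
        rw [hσ1]; exact hmom
      have hg₀m : AEStronglyMeasurable (fun x : Rd d => (‖x‖ + R) ^ p) (σ.map Prod.fst) := by
        apply Continuous.aestronglyMeasurable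
        apply (continuous_norm.add continuous_const).rpow_const
        exact fun x => Or.inr hp0.le
      exact (integrable_map_measure hg₀m measurable_fst.aemeasurable).mp h1
    have hfintσ : Integrable f σ := by
      apply Integrable.mono' hg₁int hfcont.aestronglyMeasurable
      filter_upwards [haeB] with z hz
      rw [Real.norm_of_nonneg (hfnn z)]
      apply Real.rpow_le_rpow dist_nonneg _ hp0.le
      calc dist z.1 z.2 ≤ dist z.1 0 + dist (0 : Rd d) z.2 := dist_triangle _ _ _
        _ = ‖z.1‖ + ‖z.2‖ := by rw [dist_zero_right, dist_comm, dist_zero_right]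
        _ ≤ ‖z.1‖ + R := by
            have := mem_closedBall.mp hz
            rw [dist_zero_right] at this
            linarith
    have hintσπ : ∫ z, f z ∂σ = ∫ z, f z ∂π := by
      rw [hσdef, integral_map measurable_swap.aemeasurable hfcont.aestronglyMeasurable]
      congr 1
      funext z
      simp only [hfdef, Prod.fst_swap, Prod.snd_swap, dist_comm]
    have hc₀p : c₀ ^ p = ∫ z, f z ∂σ := by
      rw [hintσπ, hc₀eq, ← Real.rpow_mul
        (integral_nonneg fun z => Real.rpow_nonneg dist_nonneg p),
        one_div_mul_cancel hp0.ne', Real.rpow_one]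
    have hσ₁le : ∫ z, f z ∂σ₁ ≤ ∫ z, f z ∂σ :=
      setIntegral_le_integral hfintσ (Filter.Eventually.of_forall hfnn)
    -- the product part
    have hμRB : μR Bᶜ = 0 := by
      simp [hμRdef, Measure.smul_apply, Measure.restrict_apply hBm.compl]
    have hν₂B : ν₂ Bᶜ = 0 := by
      rw [hν₂def, Measure.map_apply measurable_snd hBm.compl, hσ₂def,
        Measure.restrict_apply (measurable_snd hBm.compl)]
      exact measure_mono_null inter_subset_left hsnd0
    have hτcompl : τ ((B ×ˢ B)ᶜ) = 0 := by
      have hsub : (B ×ˢ B)ᶜ ⊆ (Bᶜ ×ˢ univ) ∪ ((univ : Set (Rd d)) ×ˢ Bᶜ) := by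
        intro z hz
        simp only [mem_compl_iff, mem_prod, not_and_or] at hz
        rcases hz with h | h
        · exact Or.inl (by simp [h])
        · exact Or.inr (by simp [h])
      refine measure_mono_null hsub (le_antisymm ?_ zero_le)
      calc τ ((Bᶜ ×ˢ univ) ∪ ((univ : Set (Rd d)) ×ˢ Bᶜ))
          ≤ τ (Bᶜ ×ˢ univ) + τ ((univ : Set (Rd d)) ×ˢ Bᶜ) := measure_union_le _ _
        _ = 0 := by rw [hτdef, Measure.prod_prod, Measure.prod_prod, hμRB, hν₂B]; simp
    have haeτ : ∀ᵐ z ∂τ, z ∈ B ×ˢ B := by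
      rw [ae_iff]
      convert hτcompl using 2
      rfl
    have hbound : ∀ᵐ z ∂τ, ‖f z‖ ≤ (2 * R) ^ p := by
      filter_upwards [haeτ] with z hz
      rw [Real.norm_of_nonneg (hfnn z)]
      apply Real.rpow_le_rpow dist_nonneg _ hp0.le
      have h1 : ‖z.1‖ ≤ R := by
        have := mem_closedBall.mp hz.1; rwa [dist_zero_right] at this
      have h2 : ‖z.2‖ ≤ R := by
        have := mem_closedBall.mp hz.2; rwa [dist_zero_right] at this
      calc dist z.1 z.2 ≤ dist z.1 0 + dist (0 : Rd d) z.2 := dist_triangle _ _ _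
        _ = ‖z.1‖ + ‖z.2‖ := by rw [dist_zero_right, dist_comm, dist_zero_right]
        _ ≤ 2 * R := by linarith
    have hfintτ : Integrable f τ :=
      Integrable.mono' (integrable_const ((2*R)^p)) hfcont.aestronglyMeasurable hbound
    have hτuniv : τ univ = μ Bᶜ := by
      rw [hτdef, ← univ_prod_univ, Measure.prod_prod, measure_univ, one_mul, hν₂univ]
    have hτle : ∫ z, f z ∂τ ≤ (2*R)^p * m' := by
      calc ∫ z, f z ∂τ ≤ ∫ _, (2*R)^p ∂τ := by
            apply integral_mono_ae hfintτ (integrable_const _)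
            filter_upwards [hbound] with z hz
            rwa [Real.norm_of_nonneg (hfnn z)] at hz
        _ = (τ univ).toReal * (2*R)^p := by rw [integral_const]; simp [smul_eq_mul, measureReal_def]
        _ = (2*R)^p * m' := by rw [hτuniv, hm'def, mul_comm]
    -- put it together
    have hfintσ₁ : Integrable f σ₁ := hfintσ.restrict
    have hπ'int : ∫ z, f z ∂π' = ∫ z, f z ∂σ₁ + ∫ z, f z ∂τ := by
      rw [hπ'def]; exact integral_add_measure hfintσ₁ hfintτ
    have hπ'nn : 0 ≤ ∫ z, f z ∂π' := integral_nonneg hfnn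
    have hmem : (∫ z, f z ∂π') ^ (1/p) ∈ { c : ℝ | ∃ π : Measure (Rd d × Rd d),
        IsProbabilityMeasure π ∧ π.map Prod.fst = μR ∧ π.map Prod.snd = ν ∧
        c = (∫ z, dist z.1 z.2 ^ p ∂π) ^ (1 / p) } := ⟨π', hπ'prob, hfst, hsnd, rfl⟩
    have hWle : Wp p μR ν ≤ (∫ z, f z ∂π') ^ (1/p) := csInf_le (WpSet_bddBelow _ _) hmem
    have hΔp : (2 * R * m' ^ (1/p)) ^ p = (2*R)^p * m' := by
      rw [Real.mul_rpow (by positivity) (Real.rpow_nonneg hm'nn _),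
        ← Real.rpow_mul hm'nn, one_div_mul_cancel hp0.ne', Real.rpow_one]
    have h1 : ∫ z, f z ∂π' ≤ c₀ ^ p + Δ ^ p := by
      rw [hΔdef, hΔp, hc₀p]; linarith
    calc Wp p μR ν ≤ (∫ z, f z ∂π') ^ (1/p) := hWle
      _ ≤ (c₀ ^ p + Δ ^ p) ^ (1/p) := Real.rpow_le_rpow hπ'nn h1 (by positivity)
      _ ≤ c₀ + Δ := rpow_add_rpow_le_add' hc₀nn hΔnn hp1
  -- conclude via le_csInf
  have hfinal : Wp p μR ν - Δ ≤ Wp p ν μ := by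
    apply le_csInf (WpSet_nonempty ν μ)
    intro c₀ hc₀
    linarith [key c₀ hc₀]
  linarith


lemma entropy_trunc {R : ℝ} (μ ν : Measure (Rd d)) [IsProbabilityMeasure μ]
    [IsProbabilityMeasure ν]
    (hc0 : μ (closedBall (0 : Rd d) R) ≠ 0)
    (hac : ν ≪ (μ (closedBall (0 : Rd d) R))⁻¹ • μ.restrict (closedBall (0 : Rd d) R))
    (hint : Integrable (fun x =>
        ((ν.rnDeriv ((μ (closedBall (0 : Rd d) R))⁻¹ • μ.restrict (closedBall (0 : Rd d) R)) x).toReal)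
        * Real.log ((ν.rnDeriv ((μ (closedBall (0 : Rd d) R))⁻¹ • μ.restrict (closedBall (0 : Rd d) R)) x).toReal))
      ((μ (closedBall (0 : Rd d) R))⁻¹ • μ.restrict (closedBall (0 : Rd d) R))) :
    ν ≪ μ ∧
    Integrable (fun x => ((ν.rnDeriv μ x).toReal) * Real.log ((ν.rnDeriv μ x).toReal)) μ ∧
    ∫ x, ((ν.rnDeriv μ x).toReal) * Real.log ((ν.rnDeriv μ x).toReal) ∂μ =
      (∫ x, ((ν.rnDeriv ((μ (closedBall (0 : Rd d) R))⁻¹ • μ.restrict (closedBall (0 : Rd d) R)) x).toReal)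
        * Real.log ((ν.rnDeriv ((μ (closedBall (0 : Rd d) R))⁻¹ • μ.restrict (closedBall (0 : Rd d) R)) x).toReal)
        ∂((μ (closedBall (0 : Rd d) R))⁻¹ • μ.restrict (closedBall (0 : Rd d) R)))
      - Real.log (μ (closedBall (0 : Rd d) R)).toReal := by
  set B : Set (Rd d) := closedBall (0 : Rd d) R with hBdef
  have hBm : MeasurableSet B := measurableSet_closedBall
  set c : ℝ≥0∞ := μ B with hcdef
  set μR : Measure (Rd d) := c⁻¹ • μ.restrict B with hμRdef
  have hcne : c ≠ ⊤ := measure_ne_top μ B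
  set c' : ℝ := c.toReal with hc'def
  have hc'pos : 0 < c' := ENNReal.toReal_pos hc0 hcne
  haveI hμRprob : IsProbabilityMeasure μR := by
    constructor
    simp only [hμRdef, Measure.smul_apply, Measure.restrict_apply_univ, smul_eq_mul]
    exact ENNReal.inv_mul_cancel hc0 hcne
  set g : Rd d → ℝ≥0∞ := ν.rnDeriv μR with hgdef
  have hgm : Measurable g := ν.measurable_rnDeriv μR
  set ρ : Rd d → ℝ≥0∞ := B.indicator (fun _ => c⁻¹) with hρdef
  have hρm : Measurable ρ := measurable_const.indicator hBm
  have hsmulB : c • μR = μ.restrict B := by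
    rw [hμRdef, smul_smul, ENNReal.mul_inv_cancel hc0 hcne, one_smul]
  have hμR_wd : μR = μ.withDensity ρ := by
    have h1 : μ.restrict B = μ.withDensity (B.indicator 1) := (withDensity_indicator_one hBm).symm
    have h2 : ρ = c⁻¹ • (B.indicator (1 : Rd d → ℝ≥0∞)) := by
      funext x
      by_cases hx : x ∈ B <;> simp [hρdef, indicator, hx]
    rw [hμRdef, h1, h2, withDensity_smul _ (measurable_one.indicator hBm)]
  have hν_wd : ν = μ.withDensity (fun x => ρ x * g x) := by
    have hmul : (fun x => ρ x * g x) = ρ * g := rfl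
    haveI : ν.HaveLebesgueDecomposition μR := Measure.haveLebesgueDecomposition_of_finiteMeasure
    rw [hmul, withDensity_mul μ hρm hgm, ← hμR_wd, Measure.withDensity_rnDeriv_eq ν μR hac]
  have hrn : ν.rnDeriv μ =ᵐ[μ] fun x => ρ x * g x := by
    have h2 := Measure.rnDeriv_withDensity μ (f := fun x => ρ x * g x) (hρm.mul hgm)
    rw [← hν_wd] at h2
    exact h2
  have hgfin : ∀ᵐ x ∂μ, x ∈ B → g x < ⊤ := by
    apply (ae_restrict_iff' hBm).mp
    rw [← hsmulB]
    exact Measure.ae_smul_measure (Measure.rnDeriv_lt_top ν μR) c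
  set φ : Rd d → ℝ := fun x => c'⁻¹ * (g x).toReal * (Real.log ((g x).toReal) - Real.log c')
    with hφdef
  set G : Rd d → ℝ := fun x => B.indicator φ x with hGdef
  have hFG : (fun x => ((ν.rnDeriv μ x).toReal) * Real.log ((ν.rnDeriv μ x).toReal)) =ᵐ[μ] G := by
    filter_upwards [hrn, hgfin] with x hx hxfin
    by_cases hxB : x ∈ B
    · have hρx : ρ x = c⁻¹ := indicator_of_mem hxB _
      rw [hx]
      simp only [hρx]
      rw [ENNReal.toReal_mul, ENNReal.toReal_inv]
      set t : ℝ := (g x).toReal with htdef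
      have ht : 0 ≤ t := ENNReal.toReal_nonneg
      have hGx : G x = c'⁻¹ * t * (Real.log t - Real.log c') := indicator_of_mem hxB _
      rw [hGx]
      by_cases ht0 : t = 0
      · simp [ht0]
      · rw [Real.log_mul (inv_ne_zero hc'pos.ne') ht0, Real.log_inv]
        ring
    · have hρx : ρ x = 0 := indicator_of_notMem hxB _
      have hGx : G x = 0 := indicator_of_notMem hxB _
      rw [hx]
      simp [hρx, hGx]
  have hφ_eq : φ = fun x => c'⁻¹ * ((g x).toReal * Real.log ((g x).toReal))
      - (c'⁻¹ * Real.log c') * (g x).toReal := by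
    funext x; simp only [hφdef]; ring
  have hgint : Integrable (fun x => (g x).toReal) μR := Measure.integrable_toReal_rnDeriv
  have hφint : Integrable φ μR := by
    rw [hφ_eq]
    exact (hint.const_mul _).sub (hgint.const_mul _)
  have hφintB : Integrable φ (μ.restrict B) := by
    rw [← hsmulB]
    exact (integrable_smul_measure hc0 hcne).mpr hφint
  have hGint : Integrable G μ := (integrable_indicator_iff hBm).mpr hφintB
  have hFint : Integrable (fun x => ((ν.rnDeriv μ x).toReal) * Real.log ((ν.rnDeriv μ x).toReal)) μ :=
    hGint.congr hFG.symm
  refine ⟨?_, hFint, ?_⟩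
  · refine hac.trans ?_
    refine Measure.AbsolutelyContinuous.mk fun s hs hμs => ?_
    simp only [hμRdef, Measure.smul_apply, Measure.restrict_apply hs, smul_eq_mul]
    rw [measure_mono_null inter_subset_left hμs, mul_zero]
  · have h1 : ∫ x, ((ν.rnDeriv μ x).toReal) * Real.log ((ν.rnDeriv μ x).toReal) ∂μ = ∫ x, G x ∂μ :=
      integral_congr_ae hFG
    have h2 : ∫ x, G x ∂μ = ∫ x in B, φ x ∂μ := integral_indicator hBm
    have h3 : ∫ x in B, φ x ∂μ = c' * ∫ x, φ x ∂μR := by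
      rw [← hsmulB, integral_smul_measure]
      simp [hc'def, smul_eq_mul]
    have h4 : ∫ x, φ x ∂μR = c'⁻¹ * (∫ x, (g x).toReal * Real.log ((g x).toReal) ∂μR)
        - (c'⁻¹ * Real.log c') * 1 := by
      rw [hφ_eq, integral_sub (hint.const_mul _) (hgint.const_mul _), integral_const_mul,
        integral_const_mul, Measure.integral_toReal_rnDeriv hac]
      simp
    rw [h1, h2, h3, h4]
    field_simp


lemma tail_bound {R α : ℝ} (hα : 0 < α) (hR : 0 ≤ R) (μ : Measure (Rd d)) :
    μ (closedBall (0 : Rd d) R)ᶜ ≤ ENNReal.ofReal (Real.exp (-α * R^2)) *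
      ∫⁻ x, ENNReal.ofReal (Real.exp (α * ‖x‖^2)) ∂μ := by
  have hmeas : Measurable fun x : Rd d => ENNReal.ofReal (Real.exp (α * ‖x‖^2)) := by
    apply ENNReal.measurable_ofReal.comp
    exact (Real.continuous_exp.comp (continuous_const.mul (continuous_norm.pow 2))).measurable
  calc μ (closedBall (0 : Rd d) R)ᶜ
      = ∫⁻ _ in (closedBall (0 : Rd d) R)ᶜ, 1 ∂μ := (setLIntegral_one _).symm
    _ ≤ ∫⁻ x in (closedBall (0 : Rd d) R)ᶜ,
          ENNReal.ofReal (Real.exp (-α * R^2)) * ENNReal.ofReal (Real.exp (α * ‖x‖^2)) ∂μ := by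
        apply setLIntegral_mono (measurable_const.mul hmeas)
        intro x hx
        show 1 ≤ ENNReal.ofReal (Real.exp (-α * R^2)) * ENNReal.ofReal (Real.exp (α * ‖x‖^2))
        rw [← ENNReal.ofReal_mul (Real.exp_nonneg _), ← Real.exp_add]
        apply ENNReal.one_le_ofReal.mpr
        apply Real.one_le_exp
        have hx' : R < ‖x‖ := by
          simp only [mem_compl_iff, mem_closedBall, dist_zero_right, not_le] at hx
          exact hx
        have hsq : R^2 ≤ ‖x‖^2 := by nlinarith
        nlinarith [mul_le_mul_of_nonneg_left hsq hα.le]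
    _ = ENNReal.ofReal (Real.exp (-α * R^2)) *
          ∫⁻ x in (closedBall (0 : Rd d) R)ᶜ, ENNReal.ofReal (Real.exp (α * ‖x‖^2)) ∂μ :=
        lintegral_const_mul _ hmeas
    _ ≤ _ := mul_le_mul_right (setLIntegral_le_lintegral _ _) _

lemma mom_integrable (hp1 : 1 ≤ p) (hp2 : p ≤ 2) {R α : ℝ} (hα : 0 < α) (hR : 0 ≤ R)
    (μ : Measure (Rd d)) [IsProbabilityMeasure μ]
    (hEα : ∫⁻ x, ENNReal.ofReal (Real.exp (α * ‖x‖ ^ 2)) ∂μ < ⊤) :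
    Integrable (fun x : Rd d => (‖x‖ + R) ^ p) μ := by
  have hp0 : 0 < p := lt_of_lt_of_le one_pos hp1
  have hexpcont : Continuous fun x : Rd d => Real.exp (α * ‖x‖^2) :=
    Real.continuous_exp.comp (continuous_const.mul (continuous_norm.pow 2))
  have hexp_int : Integrable (fun x : Rd d => Real.exp (α * ‖x‖^2)) μ := by
    have hm : AEMeasurable (fun x : Rd d => ENNReal.ofReal (Real.exp (α * ‖x‖^2))) μ :=
      (ENNReal.measurable_ofReal.comp hexpcont.measurable).aemeasurable
    have h1 := integrable_toReal_of_lintegral_ne_top hm hEα.ne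
    exact h1.congr (Filter.Eventually.of_forall fun x => by
      show (ENNReal.ofReal (Real.exp (α * ‖x‖^2))).toReal = Real.exp (α * ‖x‖^2)
      rw [ENNReal.toReal_ofReal (Real.exp_nonneg _)])
  have hcont : Continuous fun x : Rd d => (‖x‖ + R) ^ p := by
    apply (continuous_norm.add continuous_const).rpow_const
    exact fun x => Or.inr hp0.le
  apply Integrable.mono' ((hexp_int.const_mul (2/α)).add (integrable_const (1 + 2*R^2)))
    hcont.aestronglyMeasurable
  apply Filter.Eventually.of_forall
  intro x
  have hu0 : (0:ℝ) ≤ ‖x‖ + R := by positivity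
  rw [Real.norm_of_nonneg (Real.rpow_nonneg hu0 _)]
  have h1 : (‖x‖ + R) ^ p ≤ 1 + (‖x‖ + R) * (‖x‖ + R) := by
    rcases le_or_gt (‖x‖ + R) 1 with hu | hu
    · have := Real.rpow_le_one hu0 hu hp0.le
      nlinarith
    · have h2 : (‖x‖ + R) ^ p ≤ (‖x‖ + R) * (‖x‖ + R) := by
        calc (‖x‖ + R) ^ p ≤ (‖x‖ + R) ^ (2:ℝ) :=
              Real.rpow_le_rpow_of_exponent_le hu.le hp2
          _ = (‖x‖ + R) * (‖x‖ + R) := by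
              rw [show (2:ℝ) = ((2:ℕ):ℝ) by norm_num, Real.rpow_natCast]; ring
      linarith
  have h4 : α * ‖x‖^2 + 1 ≤ Real.exp (α * ‖x‖^2) := by
    have := Real.add_one_le_exp (α * ‖x‖^2)
    linarith
  have h5 : α * ‖x‖^2 ≤ Real.exp (α * ‖x‖^2) := by linarith
  have h6 : 2 * ‖x‖^2 ≤ 2/α * Real.exp (α * ‖x‖^2) := by
    rw [div_mul_eq_mul_div, le_div_iff₀ hα]
    nlinarith
  show (‖x‖ + R) ^ p ≤ 2/α * Real.exp (α * ‖x‖^2) + (1 + 2*R^2)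
  nlinarith [sq_nonneg (‖x‖ - R)]


lemma young_sq {S A ε : ℝ} (hS : 0 ≤ S) (hA : 0 ≤ A) (hε : 0 < ε) :
    (S + A) ^ 2 ≤ (1 + ε) * S ^ 2 + (1 + 1/ε) * A ^ 2 := by
  have hinv : ε * (1/ε) = 1 := mul_one_div_cancel hε.ne'
  nlinarith [sq_nonneg (ε * S - A), hε.le, sq_nonneg S, sq_nonneg A]

lemma assemble_arith {lam lam₁ ε E R δ m' L M W S A : ℝ}
    (hl1 : 0 < lam₁) (hlam : 0 < lam) (hε : 0 < ε) (hE : 1 ≤ E) (hR1 : 1 ≤ R)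
    (hδ : 0 < δ) (hm'0 : 0 ≤ m') (hm'δ : m' ≤ δ * E) (hL0 : 0 ≤ L) (hL : L ≤ 2 * m')
    (hW0 : 0 ≤ W) (hWSA : W ≤ S + A) (hS0 : 0 ≤ S) (hA0 : 0 ≤ A) (hM0 : 0 ≤ M)
    (hS2 : S ^ 2 = (2/lam) * (M + L)) (hA2 : A ^ 2 ≤ 4 * R ^ 2 * m')
    (hconst : lam₁ / 2 * ((1 + ε) * (2/lam)) = 1) :
    lam₁ / 2 * W ^ 2 - (2 * E + 2 * lam₁ * (1 + 1/ε) * E) * R ^ 2 * δ ≤ M := by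
  have hR2 : 1 ≤ R ^ 2 := by nlinarith
  have h1 : W ^ 2 ≤ (S + A) ^ 2 := pow_le_pow_left₀ hW0 hWSA 2
  have h2 : (S + A) ^ 2 ≤ (1 + ε) * S ^ 2 + (1 + 1/ε) * A ^ 2 := young_sq hS0 hA0 hε
  have h3 : lam₁ / 2 * ((1 + ε) * S ^ 2) = M + L := by
    rw [hS2]
    linear_combination (M + L) * hconst
  have h5 : lam₁ / 2 * (1 + 1/ε) * A ^ 2 ≤ lam₁ / 2 * (1 + 1/ε) * (4 * R ^ 2 * m') :=
    mul_le_mul_of_nonneg_left hA2 (by positivity)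
  have h6 : R ^ 2 * m' ≤ E * (R ^ 2 * δ) := by
    calc R ^ 2 * m' ≤ R ^ 2 * (δ * E) :=
          mul_le_mul_of_nonneg_left hm'δ (sq_nonneg R)
      _ = E * (R ^ 2 * δ) := by ring
  have h7 : lam₁ / 2 * (1 + 1/ε) * (4 * R ^ 2 * m') ≤ 2 * lam₁ * (1 + 1/ε) * E * (R ^ 2 * δ) := by
    calc lam₁ / 2 * (1 + 1/ε) * (4 * R ^ 2 * m')
        = 2 * lam₁ * (1 + 1/ε) * (R ^ 2 * m') := by ring
      _ ≤ 2 * lam₁ * (1 + 1/ε) * (E * (R ^ 2 * δ)) :=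
          mul_le_mul_of_nonneg_left h6 (by positivity)
      _ = 2 * lam₁ * (1 + 1/ε) * E * (R ^ 2 * δ) := by ring
  have hδR : δ ≤ R ^ 2 * δ := by nlinarith
  have h8 : L ≤ 2 * E * (R ^ 2 * δ) := by
    have h9 : δ * E ≤ (R ^ 2 * δ) * E := mul_le_mul_of_nonneg_right hδR (by linarith)
    nlinarith
  have h10 : lam₁ / 2 * W ^ 2 ≤ M + L + 2 * lam₁ * (1 + 1/ε) * E * (R ^ 2 * δ) := by
    calc lam₁ / 2 * W ^ 2 ≤ lam₁ / 2 * ((1 + ε) * S ^ 2 + (1 + 1/ε) * A ^ 2) :=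
          mul_le_mul_of_nonneg_left (h1.trans h2) (by positivity)
      _ = lam₁ / 2 * ((1 + ε) * S ^ 2) + lam₁ / 2 * (1 + 1/ε) * A ^ 2 := by ring
      _ ≤ M + L + 2 * lam₁ * (1 + 1/ε) * E * (R ^ 2 * δ) := by
          rw [h3]; linarith [h5.trans h7]
  have hKeq : (2 * E + 2 * lam₁ * (1 + 1/ε) * E) * R ^ 2 * δ
      = 2 * E * (R ^ 2 * δ) + 2 * lam₁ * (1 + 1/ε) * E * (R ^ 2 * δ) := by ring
  rw [hKeq]
  linarith

set_option maxHeartbeats 1000000 in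
/-- Estimate (2.10): the normalized restriction `μ_R` of a measure satisfying `T_p(λ)` to
the ball `B_R` satisfies a penalized transportation inequality
`H(ν|μ_R) ≥ (λ₁/2) W_p(μ_R,ν)² - K R² e^{-αR²}`. -/
theorem truncated_Tp_inequality (d : ℕ) (p lam : ℝ) (hp1 : 1 ≤ p) (hp2 : p ≤ 2)
    (hlam : 0 < lam)
    (μ : Measure (Rd d)) [IsProbabilityMeasure μ] (hTp : SatisfiesTp p lam μ)
    (α : ℝ) (hα : 0 < α) (hαlam : α < lam / 2)
    (hEα : ∫⁻ x, ENNReal.ofReal (Real.exp (α * ‖x‖ ^ 2)) ∂μ < ⊤)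
    (lam₁ : ℝ) (hlam₁ : lam₁ < lam) :
    ∃ K R₀ : ℝ, ∀ R : ℝ, R₀ ≤ R →
      ∀ ν : Measure (Rd d), IsProbabilityMeasure ν → ν (closedBall (0 : Rd d) R)ᶜ = 0 →
        ENNReal.ofReal (lam₁ / 2 *
            Wp p ((μ (closedBall (0 : Rd d) R))⁻¹ • μ.restrict (closedBall (0 : Rd d) R)) ν ^ 2
          - K * R ^ 2 * Real.exp (-α * R ^ 2)) ≤
        relEnt ν ((μ (closedBall (0 : Rd d) R))⁻¹ • μ.restrict (closedBall (0 : Rd d) R)) := by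
  rcases le_or_gt lam₁ 0 with hl1 | hl1
  · -- trivial case lam₁ ≤ 0
    refine ⟨0, 1, fun R hR ν hνp hνB => ?_⟩
    have hW2 : (0:ℝ) ≤ Wp p ((μ (closedBall (0 : Rd d) R))⁻¹ •
        μ.restrict (closedBall (0 : Rd d) R)) ν ^ 2 := sq_nonneg _
    have hle : lam₁ / 2 * Wp p ((μ (closedBall (0 : Rd d) R))⁻¹ •
        μ.restrict (closedBall (0 : Rd d) R)) ν ^ 2
        - 0 * R ^ 2 * Real.exp (-α * R ^ 2) ≤ 0 := by
      have h := mul_nonneg (neg_nonneg.mpr (by linarith : lam₁ / 2 ≤ 0)) hW2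
      linarith
    exact le_trans (le_of_eq (ENNReal.ofReal_eq_zero.mpr hle)) zero_le
  -- main case
  have hp0 : 0 < p := lt_of_lt_of_le one_pos hp1
  set E : ℝ := (∫⁻ x, ENNReal.ofReal (Real.exp (α * ‖x‖ ^ 2)) ∂μ).toReal with hEdef
  have hE1 : 1 ≤ E := by
    have h1 : (1:ℝ≥0∞) ≤ ∫⁻ x, ENNReal.ofReal (Real.exp (α * ‖x‖ ^ 2)) ∂μ := by
      calc (1:ℝ≥0∞) = ∫⁻ _, 1 ∂μ := by simp
        _ ≤ _ := lintegral_mono fun x =>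
            ENNReal.one_le_ofReal.mpr (Real.one_le_exp (by positivity))
    calc (1:ℝ) = (1:ℝ≥0∞).toReal := by simp
      _ ≤ E := ENNReal.toReal_mono hEα.ne h1
  have hE0 : 0 < E := by linarith
  set ε : ℝ := lam / lam₁ - 1 with hεdef
  have hεpos : 0 < ε := by
    have : 1 < lam / lam₁ := (one_lt_div hl1).mpr hlam₁
    rw [hεdef]; linarith
  set K : ℝ := 2 * E + 2 * lam₁ * (1 + 1/ε) * E with hKdef
  set R₀ : ℝ := max 1 (Real.sqrt (Real.log (2*E+2) / α)) with hR₀def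
  refine ⟨K, R₀, fun R hR ν hνp hνB => ?_⟩
  haveI := hνp
  have hR1 : 1 ≤ R := le_trans (le_max_left _ _) hR
  have hR0 : 0 ≤ R := by linarith
  set B : Set (Rd d) := closedBall (0 : Rd d) R with hBdef
  have hBm : MeasurableSet B := measurableSet_closedBall
  set δ : ℝ := Real.exp (-α * R ^ 2) with hδdef
  have hδ0 : 0 < δ := Real.exp_pos _
  -- tail estimate
  have htail : μ Bᶜ ≤ ENNReal.ofReal (δ * E) := by
    calc μ Bᶜ ≤ ENNReal.ofReal δ * ∫⁻ x, ENNReal.ofReal (Real.exp (α * ‖x‖ ^ 2)) ∂μ :=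
          tail_bound hα hR0 μ
      _ = ENNReal.ofReal δ * ENNReal.ofReal E := by rw [hEdef, ENNReal.ofReal_toReal hEα.ne]
      _ = ENNReal.ofReal (δ * E) := (ENNReal.ofReal_mul hδ0.le).symm
  set m' : ℝ := (μ Bᶜ).toReal with hm'def
  have hm'nn : 0 ≤ m' := ENNReal.toReal_nonneg
  have hm'le : m' ≤ δ * E := by
    have h := ENNReal.toReal_mono ENNReal.ofReal_ne_top htail
    rwa [ENNReal.toReal_ofReal (by positivity)] at h
  have hδE : δ * E ≤ 1/2 := by
    have hq0 : (0:ℝ) ≤ Real.log (2*E+2) / α := by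
      apply div_nonneg _ hα.le
      apply Real.log_nonneg; linarith
    have hRsq : Real.log (2*E+2) / α ≤ R ^ 2 := by
      have h1 : Real.sqrt (Real.log (2*E+2) / α) ≤ R := le_trans (le_max_right _ _) hR
      have h2 := Real.mul_self_sqrt hq0
      have h3 : Real.sqrt (Real.log (2*E+2) / α) * Real.sqrt (Real.log (2*E+2) / α) ≤ R * R :=
        mul_self_le_mul_self (Real.sqrt_nonneg _) h1
      nlinarith
    have h3 : Real.log (2*E+2) ≤ α * R ^ 2 := by
      rw [div_le_iff₀ hα] at hRsq; linarith
    have h4 : δ ≤ 1 / (2*E+2) := by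
      rw [hδdef]
      have h5 : Real.exp (-α * R^2) ≤ Real.exp (- Real.log (2*E+2)) := by
        apply Real.exp_le_exp.mpr; linarith
      have h6 : Real.exp (- Real.log (2*E+2)) = 1 / (2*E+2) := by
        rw [Real.exp_neg, Real.exp_log (by linarith)]
        rw [one_div]
      linarith
    have h7 : δ * E ≤ (1 / (2*E+2)) * E :=
      mul_le_mul_of_nonneg_right h4 (by linarith)
    have h8 : (1 / (2*E+2)) * E ≤ 1/2 := by
      rw [div_mul_eq_mul_div, div_le_iff₀ (by linarith : (0:ℝ) < 2*E+2)]
      linarith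
    linarith
  have hm'half : m' ≤ 1/2 := le_trans hm'le hδE
  have hsum : μ B + μ Bᶜ = 1 := by
    rw [measure_add_measure_compl hBm]; exact measure_univ
  have hμBne : μ B ≠ 0 := by
    intro h
    rw [h, zero_add] at hsum
    rw [hm'def, hsum] at hm'half
    norm_num at hm'half
  set μR : Measure (Rd d) := (μ B)⁻¹ • μ.restrict B with hμRdef
  haveI hμRprob : IsProbabilityMeasure μR := by
    constructor
    simp only [hμRdef, Measure.smul_apply, Measure.restrict_apply_univ, smul_eq_mul]
    exact ENNReal.inv_mul_cancel hμBne (measure_ne_top μ B)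
  by_cases hcond : ν ≪ μR ∧ Integrable (fun x =>
      ((ν.rnDeriv μR x).toReal) * Real.log ((ν.rnDeriv μR x).toReal)) μR
  swap
  · rw [relEnt, if_neg hcond]; exact le_top
  obtain ⟨hac, hint⟩ := hcond
  set h_R : ℝ := ∫ x, ((ν.rnDeriv μR x).toReal) * Real.log ((ν.rnDeriv μR x).toReal) ∂μR
    with hh_Rdef
  have hRE : relEnt ν μR = ENNReal.ofReal h_R := by
    rw [relEnt, if_pos ⟨hac, hint⟩]
  obtain ⟨hacμ, hintμ, heq⟩ := entropy_trunc μ ν hμBne hac hint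
  set c' : ℝ := (μ B).toReal with hc'def
  have hc'pos : 0 < c' := ENNReal.toReal_pos hμBne (measure_ne_top μ B)
  have hc'm' : c' + m' = 1 := by
    rw [hc'def, hm'def, ← ENNReal.toReal_add (measure_ne_top μ B) (measure_ne_top μ Bᶜ), hsum]
    simp
  have hc'le1 : c' ≤ 1 := by linarith
  set L : ℝ := - Real.log c' with hLdef
  have hL0 : 0 ≤ L := by
    rw [hLdef]
    simp only [neg_nonneg]
    exact Real.log_nonpos hc'pos.le hc'le1
  have hLle : L ≤ 2 * m' := by
    have h1 : Real.log c'⁻¹ ≤ c'⁻¹ - 1 := Real.log_le_sub_one_of_pos (by positivity)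
    rw [Real.log_inv] at h1
    have h2 : c'⁻¹ - 1 = m' / c' := by field_simp; linarith
    rw [hLdef]
    rw [h2] at h1
    have h3 : m' / c' ≤ 2 * m' := by
      rw [div_le_iff₀ hc'pos]
      have hc'half : 1/2 ≤ c' := by linarith
      linarith [mul_nonneg hm'nn (by linarith : (0:ℝ) ≤ 2 * c' - 1)]
    linarith
  -- apply the transport inequality
  have hval : ∫ x, ((ν.rnDeriv μ x).toReal) * Real.log ((ν.rnDeriv μ x).toReal) ∂μ = h_R + L := by
    rw [heq]; rw [hLdef]; ring
  have hTpν := hTp ν hνp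
  rw [relEnt, if_pos ⟨hacμ, hintμ⟩, hval] at hTpν
  have hMnn : 0 ≤ max h_R 0 + L := add_nonneg (le_max_right _ _) hL0
  have h2lam : (0:ℝ) ≤ 2 / lam := by positivity
  have hW0 : Wp p ν μ ≤ Real.sqrt ((2/lam) * (max h_R 0 + L)) := by
    rcases le_or_gt (h_R + L) 0 with hv | hv
    · have h0 : (ENNReal.ofReal (2/lam) * ENNReal.ofReal (h_R + L)) ^ (1/2:ℝ) = 0 := by
        rw [ENNReal.ofReal_eq_zero.mpr hv, mul_zero, ENNReal.zero_rpow_of_pos (by norm_num)]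
      rw [h0, le_zero_iff, ENNReal.ofReal_eq_zero] at hTpν
      exact le_trans hTpν (Real.sqrt_nonneg _)
    · rw [← ENNReal.ofReal_mul h2lam,
        ENNReal.ofReal_rpow_of_nonneg (mul_nonneg h2lam hv.le) (by norm_num : (0:ℝ) ≤ 1/2)]
        at hTpν
      have h1 : Wp p ν μ ≤ ((2/lam) * (h_R + L)) ^ (1/2:ℝ) :=
        (ENNReal.ofReal_le_ofReal_iff (Real.rpow_nonneg (mul_nonneg h2lam hv.le) _)).mp hTpν
      calc Wp p ν μ ≤ ((2/lam) * (h_R + L)) ^ (1/2:ℝ) := h1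
        _ = Real.sqrt ((2/lam) * (h_R + L)) := (Real.sqrt_eq_rpow _).symm
        _ ≤ Real.sqrt ((2/lam) * (max h_R 0 + L)) := by
            apply Real.sqrt_le_sqrt
            apply mul_le_mul_of_nonneg_left _ h2lam
            have : h_R ≤ max h_R 0 := le_max_left _ _
            linarith
  -- coupling bound
  have hmom := mom_integrable hp1 hp2 hα hR0 μ hEα
  have hWt := Wp_truncation_bound hp1 hR0 μ ν hνB hmom hμBne
  rw [← hμRdef, ← hm'def] at hWt
  set W : ℝ := Wp p μR ν with hWdef
  have hWnn : 0 ≤ W := Wp_nonneg μR ν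
  set S : ℝ := Real.sqrt ((2/lam) * (max h_R 0 + L)) with hSdef
  have hSnn : 0 ≤ S := Real.sqrt_nonneg _
  set A : ℝ := 2 * R * m' ^ (1/p) with hAdef
  have hAnn : 0 ≤ A := by positivity
  have hWSA : W ≤ S + A := by
    calc W ≤ Wp p ν μ + A := hWt
      _ ≤ S + A := by linarith [hW0]
  have hS2 : S ^ 2 = (2/lam) * (max h_R 0 + L) := Real.sq_sqrt (mul_nonneg h2lam hMnn)
  have hA2 : A ^ 2 ≤ 4 * R^2 * m' := by
    have h1 : (m' ^ (1/p)) ^ (2:ℕ) = m' ^ (2/p) := by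
      rw [← Real.rpow_natCast (m' ^ (1/p)) 2, ← Real.rpow_mul hm'nn,
        show (1/p) * ((2:ℕ):ℝ) = 2/p by push_cast; ring]
    have h2 : m' ^ (2/p) ≤ m' := by
      rcases eq_or_lt_of_le hm'nn with h | h
      · rw [← h, Real.zero_rpow (by positivity : (2:ℝ)/p ≠ 0)]
      · calc m' ^ (2/p) ≤ m' ^ (1:ℝ) := by
              apply Real.rpow_le_rpow_of_exponent_ge h (by linarith)
              rw [le_div_iff₀ hp0]; linarith
          _ = m' := Real.rpow_one m'
    have h3 : A ^ 2 = 4 * R^2 * (m' ^ (1/p)) ^ (2:ℕ) := by rw [hAdef]; ring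
    rw [h3, h1]
    exact mul_le_mul_of_nonneg_left h2 (by positivity)
  have hconst : lam₁ / 2 * ((1 + ε) * (2/lam)) = 1 := by
    rw [hεdef]
    field_simp
    ring
  have hreal : lam₁ / 2 * W ^ 2 - K * R^2 * δ ≤ max h_R 0 := by
    have hasm := assemble_arith hl1 hlam hεpos hE1 hR1 hδ0 hm'nn hm'le hL0 hLle hWnn hWSA
      hSnn hAnn (le_max_right h_R 0) hS2 hA2 hconst
    have hK : K * R^2 * δ = (2 * E + 2 * lam₁ * (1 + 1/ε) * E) * R ^ 2 * δ := by
      rw [hKdef]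
    linarith
  -- conclude
  rw [hRE]
  rcases le_total h_R 0 with h0 | h0
  · rw [max_eq_right h0] at hreal
    exact le_trans (le_of_eq (ENNReal.ofReal_eq_zero.mpr hreal)) zero_le
  · rw [max_eq_left h0] at hreal
    exact ENNReal.ofReal_le_ofReal hreal
end
end
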